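/- arXiv:1707.06274 — 11 statements merged into one kernel-verified Lean document; each statement's English description precedes it below -/
import Mathlib

section
/- Let λ ≥ 0 and define F_λ(x,y,z) = arctan x + arctan y + arctan z − arctan λ + arctan(λ−x) − arctan(y+z) on the set Δ_λ = {(x,y,z) ∈ ℝ³ : −y ≤ x ≤ λ, −λ ≤ 2y ≤ 0, x−λ ≤ z ≤ 0}. Then the minimum of F_λ over Δ_λ equals 0. -/
/-!
Writing `y = -a`, `z = -c` with `a, c ≥ 0`, oddness of `arctan` turns `F_λ ≥ 0` into
`arctan a + arctan c - arctan (a + c) ≤ arctan x + arctan (λ - x) - arctan λ`.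
Both sides are instances of `u ↦ arctan u - arctan (u + b)` (for `b ≥ 0`), which is monotone on
`u ≥ -b/2` since its derivative is `1/(1 + u²) - 1/(1 + (u + b)²)`; applying this once with
`b = λ - x` (moving `a` up to `x`) and once with `b = a` (moving `c` up to `λ - x`) gives the
inequality. The value `0` is attained at the origin.
-/

open Real Set

lemma monotoneOn_arctan_sub_arctan_add {b : ℝ} (hb : 0 ≤ b) :
    MonotoneOn (fun u => arctan u - arctan (u + b)) (Ici (-b / 2)) := by
  have hderiv (u : ℝ) : HasDerivAt (fun u => arctan u - arctan (u + b))
      (1 / (1 + u ^ 2) * 1 - 1 / (1 + (u + b) ^ 2) * 1) u :=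
    (hasDerivAt_id' u).arctan.fun_sub ((hasDerivAt_id' u).add_const b).arctan
  refine monotoneOn_of_hasDerivWithinAt_nonneg (convex_Ici _)
    (fun u _ => (hderiv u).continuousAt.continuousWithinAt)
    (fun u _ => (hderiv u).hasDerivWithinAt) fun u hu => ?_
  rw [interior_Ici, mem_Ioi] at hu
  have hsq : 1 + u ^ 2 ≤ 1 + (u + b) ^ 2 := by nlinarith
  simpa only [mul_one, sub_nonneg] using one_div_le_one_div_of_le (by positivity) hsq

lemma arctan_add_arctan_sub_arctan_add_le {a c x l : ℝ} (ha : 0 ≤ a) (hax : a ≤ x) (hc : 0 ≤ c)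
    (hcx : c ≤ l - x) :
    arctan a + arctan c - arctan (a + c) ≤ arctan x + arctan (l - x) - arctan l := by
  have hx : -(l - x) / 2 ≤ a := by linarith
  have hmove_a := monotoneOn_arctan_sub_arctan_add (b := l - x) (by linarith) hx
    (hx.trans hax) hax
  have hmove_c := monotoneOn_arctan_sub_arctan_add ha (by linarith : -a / 2 ≤ c)
    (by linarith : -a / 2 ≤ l - x) hcx
  simp only [add_sub_cancel] at hmove_a hmove_c
  rw [add_comm c a, add_comm (l - x) a] at hmove_c
  linarith

/-- The minimum of F_λ over Δ_λ equals 0. -/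
theorem min_F_lambda (l : ℝ) (hl : 0 ≤ l)
    (F : ℝ × ℝ × ℝ → ℝ)
    (hF : ∀ x y z : ℝ, F (x, y, z) =
      Real.arctan x + Real.arctan y + Real.arctan z - Real.arctan l
        + Real.arctan (l - x) - Real.arctan (y + z))
    (Δ : Set (ℝ × ℝ × ℝ))
    (hΔ : Δ = {p : ℝ × ℝ × ℝ |
      -p.2.1 ≤ p.1 ∧ p.1 ≤ l ∧ -l ≤ 2 * p.2.1 ∧ 2 * p.2.1 ≤ 0 ∧
      p.1 - l ≤ p.2.2 ∧ p.2.2 ≤ 0}) :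
    IsLeast (F '' Δ) 0 := by
  subst hΔ
  refine ⟨⟨(0, 0, 0), by simpa using hl, by simp [hF]⟩, ?_⟩
  rintro _ ⟨⟨x, y, z⟩, ⟨hyx, -, -, hy, hzx, hz⟩, rfl⟩
  have key := arctan_add_arctan_sub_arctan_add_le (a := -y) (c := -z) (x := x) (l := l)
    (by linarith) hyx (by linarith) (by linarith)
  rw [← neg_add, arctan_neg, arctan_neg, arctan_neg] at key
  rw [hF]
  linarith
end

section
/- Let λ > 0 and F_λ, Δ_λ as before. The minimum value 0 of F_λ on Δ_λ is attained at (x,y,z) ∈ Δ_λ if and only if one of the following holds: (i) x = λ, z = 0, y ∈ [−λ/2, 0]; (ii) x = −y, z = −y−λ, y ∈ [−λ/2, 0]; (iii) x = y = 0, z ∈ [−λ, 0]. -/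
/-!
Write `G(u, v) = arctan u + arctan v - arctan (u + v)` (`arctanDefect`). Since `arctan` is odd,
`F_λ(x, y, z) = G(x, λ - x) - G(-y, -z)`, and on `Δ_λ` we have `0 ≤ -y ≤ x` and `0 ≤ -z ≤ λ - x`.
The derivative of `v ↦ G(u, v)` is `1/(1+v²) - 1/(1+(u+v)²)`, so on `v ≥ 0` the function `G` is
nondecreasing in each variable, strictly when the other one is positive. Hence `F_λ ≥ 0` on `Δ_λ`,
with equality exactly when `(-y, -z) = (x, λ - x)` or one of `x`, `λ - x` vanishes.
-/

open Real Set

noncomputable def arctanDefect (u v : ℝ) : ℝ := arctan u + arctan v - arctan (u + v)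

lemma arctanDefect_comm (u v : ℝ) : arctanDefect u v = arctanDefect v u := by
  simp only [arctanDefect, add_comm]

@[simp]
lemma arctanDefect_zero_left (v : ℝ) : arctanDefect 0 v = 0 := by
  simp [arctanDefect]

@[simp]
lemma arctanDefect_zero_right (u : ℝ) : arctanDefect u 0 = 0 := by
  rw [arctanDefect_comm, arctanDefect_zero_left]

lemma arctanDefect_neg_neg (u v : ℝ) : arctanDefect (-u) (-v) = -arctanDefect u v := by
  simp only [arctanDefect, ← neg_add, arctan_neg]
  ring

lemma hasDerivAt_arctanDefect_right (u v : ℝ) :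
    HasDerivAt (arctanDefect u) (1 / (1 + v ^ 2) - 1 / (1 + (u + v) ^ 2)) v := by
  have hshift : HasDerivAt (fun w => arctan (u + w)) (1 / (1 + (u + v) ^ 2)) v := by
    simpa using ((hasDerivAt_id v).const_add u).arctan
  exact ((hasDerivAt_arctan v).const_add (arctan u)).sub hshift

lemma strictMonoOn_arctanDefect_right {u : ℝ} (hu : 0 < u) :
    StrictMonoOn (arctanDefect u) (Ici 0) := by
  refine strictMonoOn_of_deriv_pos (convex_Ici 0)
    (fun v _ => (hasDerivAt_arctanDefect_right u v).continuousAt.continuousWithinAt) ?_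
  intro v hv
  rw [interior_Ici, mem_Ioi] at hv
  rw [(hasDerivAt_arctanDefect_right u v).deriv, sub_pos]
  exact one_div_lt_one_div_of_lt (by positivity) (by nlinarith)

lemma monotoneOn_arctanDefect_right {u : ℝ} (hu : 0 ≤ u) :
    MonotoneOn (arctanDefect u) (Ici 0) := by
  rcases hu.eq_or_lt with rfl | hu
  · intro v _ w _ _
    simp
  · exact (strictMonoOn_arctanDefect_right hu).monotoneOn

lemma arctanDefect_eq_iff {u v a b : ℝ} (hu : 0 ≤ u) (hv : 0 ≤ v) (hua : u ≤ a) (hvb : v ≤ b) :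
    arctanDefect u v = arctanDefect a b ↔ (u = a ∧ v = b) ∨ a = 0 ∨ b = 0 := by
  have ha : 0 ≤ a := hu.trans hua
  have hb : 0 ≤ b := hv.trans hvb
  constructor
  · intro heq
    have hleft : arctanDefect u v ≤ arctanDefect a v := by
      rw [arctanDefect_comm u, arctanDefect_comm a]
      exact monotoneOn_arctanDefect_right hv hu ha hua
    have hright : arctanDefect a v ≤ arctanDefect a b :=
      monotoneOn_arctanDefect_right ha hv hb hvb
    rcases ha.eq_or_lt with ha0 | ha
    · exact Or.inr (Or.inl ha0.symm)
    obtain rfl : v = b := (strictMonoOn_arctanDefect_right ha).injOn hv hb (by linarith)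
    rcases hv.eq_or_lt with hv0 | hv
    · exact Or.inr (Or.inr hv0.symm)
    refine Or.inl ⟨(strictMonoOn_arctanDefect_right hv).injOn hu ha.le ?_, rfl⟩
    rw [arctanDefect_comm v, arctanDefect_comm v]
    linarith
  · rintro (⟨rfl, rfl⟩ | rfl | rfl)
    · rfl
    · rw [le_antisymm hua hu]
      simp
    · rw [le_antisymm hvb hv]
      simp

theorem min_F_lambda_cases_general (l : ℝ)
    (F : ℝ × ℝ × ℝ → ℝ)
    (hF : ∀ x y z : ℝ, F (x, y, z) =
      Real.arctan x + Real.arctan y + Real.arctan z - Real.arctan l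
        + Real.arctan (l - x) - Real.arctan (y + z))
    (Δ : Set (ℝ × ℝ × ℝ))
    (hΔ : Δ = {p : ℝ × ℝ × ℝ |
      -p.2.1 ≤ p.1 ∧ p.1 ≤ l ∧ -l ≤ 2 * p.2.1 ∧ 2 * p.2.1 ≤ 0 ∧
      p.1 - l ≤ p.2.2 ∧ p.2.2 ≤ 0})
    (x y z : ℝ) (hmem : (x, y, z) ∈ Δ) :
    F (x, y, z) = 0 ↔
      (x = l ∧ z = 0 ∧ y ∈ Set.Icc (-(l/2)) 0) ∨
      (x = -y ∧ z = -y - l ∧ y ∈ Set.Icc (-(l/2)) 0) ∨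
      (x = 0 ∧ y = 0 ∧ z ∈ Set.Icc (-l) 0) := by
  subst hΔ
  simp only [mem_ofPred_eq] at hmem
  obtain ⟨hyx, hxl, hly, hy, hxz, hz⟩ := hmem
  have hF_defect : F (x, y, z) = arctanDefect x (l - x) - arctanDefect (-y) (-z) := by
    rw [hF, arctanDefect_neg_neg]
    simp only [arctanDefect, add_sub_cancel]
    ring
  rw [hF_defect, sub_eq_zero, eq_comm,
    arctanDefect_eq_iff (by linarith) (by linarith) (by linarith) (by linarith)]
  constructor
  · rintro (⟨hxy, hzx⟩ | hx | hx)
    · exact Or.inr (Or.inl ⟨by linarith, by linarith, by linarith, by linarith⟩)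
    · exact Or.inr (Or.inr ⟨hx, by linarith, by linarith, by linarith⟩)
    · exact Or.inl ⟨by linarith, by linarith, by linarith, by linarith⟩
  · rintro (⟨hx, -⟩ | ⟨hx, hz, -⟩ | ⟨hx, -⟩)
    · exact Or.inr (Or.inr (by linarith))
    · exact Or.inl ⟨by linarith, by linarith⟩
    · exact Or.inr (Or.inl hx)

/-- Characterization of the minimizers of F_λ over Δ_λ for λ > 0. -/
theorem min_F_lambda_cases (l : ℝ) (hl : 0 < l)
    (F : ℝ × ℝ × ℝ → ℝ)
    (hF : ∀ x y z : ℝ, F (x, y, z) =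
      Real.arctan x + Real.arctan y + Real.arctan z - Real.arctan l
        + Real.arctan (l - x) - Real.arctan (y + z))
    (Δ : Set (ℝ × ℝ × ℝ))
    (hΔ : Δ = {p : ℝ × ℝ × ℝ |
      -p.2.1 ≤ p.1 ∧ p.1 ≤ l ∧ -l ≤ 2 * p.2.1 ∧ 2 * p.2.1 ≤ 0 ∧
      p.1 - l ≤ p.2.2 ∧ p.2.2 ≤ 0})
    (x y z : ℝ) (hmem : (x, y, z) ∈ Δ) :
    F (x, y, z) = 0 ↔
      (x = l ∧ z = 0 ∧ y ∈ Set.Icc (-(l/2)) 0) ∨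
      (x = -y ∧ z = -y - l ∧ y ∈ Set.Icc (-(l/2)) 0) ∨
      (x = 0 ∧ y = 0 ∧ z ∈ Set.Icc (-l) 0) :=
  min_F_lambda_cases_general l F hF Δ hΔ x y z hmem
end

section
/- Let a < b, q ≥ 0, and let u : [a,b] → ℝ be q-concave (i.e., x ↦ u(x) − (q/2)x² is concave) with u(a) = u(b) ≥ u(x) for all x ∈ [a,b]. Then for every x ∈ (a,b), the one-sided derivatives exist and satisfy (q/2)(x−b) ≤ u'₊(x) ≤ u'₋(x) ≤ (q/2)(x−a). -/
/-!
Subtracting `(q/2)x²` turns `u` into a concave `v`, whose one-sided derivatives exist at interior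
points and lie between the secant slopes to the endpoints: `slope v x b ≤ v'₊(x) ≤ v'₋(x) ≤
slope v a x`. Adding back `q x`, and using `slope v x y = slope u x y - (q/2)(x + y)`, the bounds
follow because `u(x) ≤ u(a) = u(b)` makes `slope u x b ≥ 0` and `slope u a x ≤ 0`.
-/

open Set

namespace ConcaveOn

variable {S : Set ℝ} {f : ℝ → ℝ} {x : ℝ}

lemma differentiableWithinAt_Ioi_of_mem_interior (hfc : ConcaveOn ℝ S f)
    (hxs : x ∈ interior S) : DifferentiableWithinAt ℝ f (Ioi x) x := by
  simpa using (hfc.neg.differentiableWithinAt_Ioi_of_mem_interior hxs).neg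

lemma differentiableWithinAt_Iio_of_mem_interior (hfc : ConcaveOn ℝ S f)
    (hxs : x ∈ interior S) : DifferentiableWithinAt ℝ f (Iio x) x := by
  simpa using (hfc.neg.differentiableWithinAt_Iio_of_mem_interior hxs).neg

lemma rightDeriv_le_leftDeriv_of_mem_interior (hfc : ConcaveOn ℝ S f) (hxs : x ∈ interior S) :
    derivWithin f (Ioi x) x ≤ derivWithin f (Iio x) x := by
  simpa [derivWithin.neg] using hfc.neg.leftDeriv_le_rightDeriv_of_mem_interior hxs

end ConcaveOn

lemma slope_sub_mul_sq (u : ℝ → ℝ) (c : ℝ) {x y : ℝ} (hxy : x ≠ y) :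
    slope (fun t => u t - c * t ^ 2) x y = slope u x y - c * (x + y) := by
  have : y - x ≠ 0 := sub_ne_zero.2 hxy.symm
  simp only [slope_def_field]
  field_simp
  ring

lemma HasDerivWithinAt.of_sub_mul_sq {u : ℝ → ℝ} {c d x : ℝ} {s : Set ℝ}
    (h : HasDerivWithinAt (fun t => u t - c * t ^ 2) d s x) :
    HasDerivWithinAt u (d + c * (2 * x)) s x := by
  have hsq : HasDerivWithinAt (fun t => c * t ^ 2) (c * (2 * x)) s x := by
    simpa using ((hasDerivAt_pow 2 x).const_mul c).hasDerivWithinAt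
  simpa only [Pi.add_def, sub_add_cancel] using h.add hsq

theorem qconcave_one_sided_deriv_bounds_general (a b q : ℝ) (hab : a < b)
    (u : ℝ → ℝ)
    (hconc : ConcaveOn ℝ (Set.Icc a b) (fun x => u x - q / 2 * x^2))
    (hend : u a = u b) (hmax : ∀ x ∈ Set.Icc a b, u x ≤ u a)
    (x : ℝ) (hx : x ∈ Set.Ioo a b) :
    ∃ dp dm : ℝ,
      HasDerivWithinAt u dp (Set.Ici x) x ∧
      HasDerivWithinAt u dm (Set.Iic x) x ∧
      q / 2 * (x - b) ≤ dp ∧ dp ≤ dm ∧ dm ≤ q / 2 * (x - a) := by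
  have hxs : x ∈ interior (Icc a b) := by rwa [interior_Icc]
  have hxI : x ∈ Icc a b := Ioo_subset_Icc_self hx
  have hright := hconc.differentiableWithinAt_Ioi_of_mem_interior hxs
  have hleft := hconc.differentiableWithinAt_Iio_of_mem_interior hxs
  refine ⟨_, _, hright.hasDerivWithinAt.of_sub_mul_sq.Ici_of_Ioi,
    hleft.hasDerivWithinAt.of_sub_mul_sq.Iic_of_Iio, ?_,
    by linarith [hconc.rightDeriv_le_leftDeriv_of_mem_interior hxs], ?_⟩
  · have hslope := hconc.slope_le_rightDeriv hxI (right_mem_Icc.2 hab.le) hx.2 hright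
    have hub : 0 ≤ slope u x b := (slope_nonneg_iff_of_le hx.2.le).2 (hend ▸ hmax x hxI)
    rw [slope_sub_mul_sq u _ hx.2.ne] at hslope
    linarith
  · have hslope := hconc.leftDeriv_le_slope (left_mem_Icc.2 hab.le) hxI hx.1 hleft
    have hua : slope u a x ≤ 0 := (slope_nonpos_iff_of_le hx.1.le).2 (hmax x hxI)
    rw [slope_sub_mul_sq u _ hx.1.ne] at hslope
    linarith

/-- One-sided derivative bounds for a q-concave function with equal maximal
boundary values: (q/2)(x−b) ≤ u'₊(x) ≤ u'₋(x) ≤ (q/2)(x−a) on (a,b). -/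
theorem qconcave_one_sided_deriv_bounds (a b q : ℝ) (hab : a < b) (hq : 0 ≤ q)
    (u : ℝ → ℝ)
    (hconc : ConcaveOn ℝ (Set.Icc a b) (fun x => u x - q / 2 * x^2))
    (hend : u a = u b) (hmax : ∀ x ∈ Set.Icc a b, u x ≤ u a)
    (x : ℝ) (hx : x ∈ Set.Ioo a b) :
    ∃ dp dm : ℝ,
      HasDerivWithinAt u dp (Set.Ici x) x ∧
      HasDerivWithinAt u dm (Set.Iic x) x ∧
      q / 2 * (x - b) ≤ dp ∧ dp ≤ dm ∧ dm ≤ q / 2 * (x - a) :=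
  qconcave_one_sided_deriv_bounds_general a b q hab u hconc hend hmax x hx
end

section
/- Let M > 0 and q ∈ [0,1] with 2M ≥ q. Define φ_{M;q}(γ) = M⁴ − M²(1−γ)² − q²γ²(1−γ)⁴ − 3M²q²γ²(1−γ)². Then φ_{M;q} is strictly increasing on [0,1]. -/
/-!
Writing `s = 1 - γ`, the derivative of `φ_{M;q}` factors as `2 s · B(γ)` with
`B = M² - q² f(γ) - 3 M² q² g(γ)`, `f(t) = t (1-t)² (1-3t)` and `g(t) = t (1-2t)`.
Since `q² ≤ 4M²` and `q² ≤ 1`, we get `B ≥ M² (1 - 4 f⁺ - 3 g⁺)`, and an elementary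
estimate on `f` and `g` shows that `4 f⁺ + 3 g⁺ < 1` everywhere.
-/

open Set

noncomputable def newtonPhi (M q γ : ℝ) : ℝ :=
  M^4 - M^2 * (1 - γ)^2 - q^2 * γ^2 * (1 - γ)^4 - 3 * M^2 * q^2 * γ^2 * (1 - γ)^2

theorem hasDerivAt_newtonPhi (M q x : ℝ) :
    HasDerivAt (newtonPhi M q)
      (2 * (1 - x) * (M^2 - q^2 * (x * (1 - x)^2 * (1 - 3 * x))
        - 3 * M^2 * q^2 * (x * (1 - 2 * x)))) x := by
  have hs : HasDerivAt (fun γ : ℝ => 1 - γ) (-1) x := (hasDerivAt_id x).const_sub 1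
  have hγ : HasDerivAt (fun γ : ℝ => γ) 1 x := hasDerivAt_id x
  have h := (((hasDerivAt_const x (M^4)).fun_sub ((hs.fun_pow 2).const_mul (M^2))).fun_sub
    (((hγ.fun_pow 2).fun_mul (hs.fun_pow 4)).const_mul (q^2))).fun_sub
    (((hγ.fun_pow 2).fun_mul (hs.fun_pow 2)).const_mul (3 * M^2 * q^2))
  have hφ : newtonPhi M q = fun γ => M^4 - M^2 * (1 - γ)^2 - q^2 * (γ^2 * (1 - γ)^4)
      - 3 * M^2 * q^2 * (γ^2 * (1 - γ)^2) := by
    funext γ; unfold newtonPhi; ring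
  rw [hφ]
  refine h.congr_deriv ?_
  norm_num
  ring

theorem four_mul_max_add_three_mul_max_lt_one (t : ℝ) :
    4 * max (t * (1 - t)^2 * (1 - 3 * t)) 0 + 3 * max (t * (1 - 2 * t)) 0 < 1 := by
  have hg_lt : 3 * (t * (1 - 2 * t)) < 1 := by nlinarith [sq_nonneg (t - 1 / 4)]
  rcases le_total t 0 with ht0 | ht0
  · have hf : t * (1 - t)^2 * (1 - 3 * t) ≤ 0 :=
      mul_nonpos_of_nonpos_of_nonneg (mul_nonpos_of_nonpos_of_nonneg ht0 (sq_nonneg _))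
        (by linarith)
    have hg : t * (1 - 2 * t) ≤ 0 := mul_nonpos_of_nonpos_of_nonneg ht0 (by linarith)
    rw [max_eq_right hf, max_eq_right hg]
    norm_num
  rcases le_total t (1 / 3) with ht3 | ht3
  · have hf : 0 ≤ t * (1 - t)^2 * (1 - 3 * t) :=
      mul_nonneg (mul_nonneg ht0 (sq_nonneg _)) (by linarith)
    have hg : 0 ≤ t * (1 - 2 * t) := mul_nonneg ht0 (by linarith)
    rw [max_eq_left hf, max_eq_left hg]
    nlinarith [sq_nonneg (t - 1 / 6), mul_nonneg ht0 (sub_nonneg.2 ht3)]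
  have hf : t * (1 - t)^2 * (1 - 3 * t) ≤ 0 :=
    mul_nonpos_of_nonneg_of_nonpos (mul_nonneg ht0 (sq_nonneg _)) (by linarith)
  rw [max_eq_right hf]
  rcases max_cases (t * (1 - 2 * t)) 0 with ⟨h, _⟩ | ⟨h, _⟩ <;> rw [h] <;> linarith

theorem newtonPhi_derivFactor_pos {m a t : ℝ} (hm : 0 < m) (ha0 : 0 ≤ a) (ha1 : a ≤ 1)
    (ha4 : a ≤ 4 * m) :
    0 < m - a * (t * (1 - t)^2 * (1 - 3 * t)) - 3 * m * a * (t * (1 - 2 * t)) := by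
  set f := t * (1 - t)^2 * (1 - 3 * t)
  set g := t * (1 - 2 * t)
  have hf : a * f ≤ 4 * m * max f 0 := calc
    a * f ≤ a * max f 0 := mul_le_mul_of_nonneg_left (le_max_left _ _) ha0
    _ ≤ 4 * m * max f 0 := mul_le_mul_of_nonneg_right ha4 (le_max_right _ _)
  have hg : a * g ≤ max g 0 := calc
    a * g ≤ a * max g 0 := mul_le_mul_of_nonneg_left (le_max_left _ _) ha0
    _ ≤ 1 * max g 0 := mul_le_mul_of_nonneg_right ha1 (le_max_right _ _)
    _ = max g 0 := one_mul _
  have hfg := mul_lt_mul_of_pos_left (four_mul_max_add_three_mul_max_lt_one t) hm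
  nlinarith [mul_le_mul_of_nonneg_left hg hm.le]

/-- φ_{M;q}(γ) = M⁴ − M²(1−γ)² − q²γ²(1−γ)⁴ − 3M²q²γ²(1−γ)² is strictly
increasing on [0,1] when M > 0, 0 ≤ q ≤ 1 and 2M ≥ q. -/
theorem phi_strictMonoOn (M q : ℝ) (hM : 0 < M) (hq0 : 0 ≤ q) (hq1 : q ≤ 1)
    (h2M : q ≤ 2 * M) :
    StrictMonoOn (fun γ : ℝ =>
        M^4 - M^2 * (1 - γ)^2 - q^2 * γ^2 * (1 - γ)^4
          - 3 * M^2 * q^2 * γ^2 * (1 - γ)^2)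
      (Set.Icc 0 1) := by
  have hq_sq_le_one : q^2 ≤ 1 := pow_le_one₀ hq0 hq1
  have hq_sq_le : q^2 ≤ 4 * M^2 := by nlinarith
  change StrictMonoOn (newtonPhi M q) (Icc 0 1)
  refine strictMonoOn_of_deriv_pos (convex_Icc 0 1)
    (fun x _ => (hasDerivAt_newtonPhi M q x).continuousAt.continuousWithinAt) ?_
  intro x hx
  rw [interior_Icc] at hx
  rw [(hasDerivAt_newtonPhi M q x).deriv]
  exact mul_pos (by linarith [hx.2])
    (newtonPhi_derivFactor_pos (pow_pos hM 2) (sq_nonneg q) hq_sq_le_one hq_sq_le)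
end

section
/- Let M ∈ (0,1), q ∈ (0,1] with 2M ≥ q, and define R_{M;q}(γ) = (2/q) arctan(qγ) + 2(1−γ)³/(M² + (1−γ)²) for γ ∈ [0,1]. Then there exists a unique γ* ∈ (0,1) such that R_{M;q}(γ*) = min over [0,1] of R_{M;q}. -/
/-!
`R` has derivative `2φ / ((1 + q²γ²)(M² + (1 - γ)²)²)`, so it has the sign of the polynomial `φ`.
For `q ≤ 2M` and `q ≤ 1` the derivative of `φ` is positive on `(-∞, 1)`, and
`φ(0) = M⁴ - M² < 0 < M⁴ = φ(1)`. Hence `φ` has a single zero `c ∈ (0, 1)`, `R` strictly decreases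
on `[0, c]` and strictly increases on `[c, 1]`, and `c` is its only minimizer on `[0, 1]`.
-/

open Set Real

theorem isMinOn_Icc_iff_of_strictAntiOn_of_strictMonoOn {f : ℝ → ℝ} {a b c y : ℝ}
    (hc : c ∈ Icc a b) (hanti : StrictAntiOn f (Icc a c)) (hmono : StrictMonoOn f (Icc c b))
    (hy : y ∈ Icc a b) : IsMinOn f (Icc a b) y ↔ y = c := by
  have hlt : ∀ x ∈ Icc a b, x ≠ c → f c < f x := by
    intro x hx hxc
    rcases hxc.lt_or_gt with h | h
    · exact hanti ⟨hx.1, h.le⟩ ⟨hc.1, le_rfl⟩ h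
    · exact hmono ⟨le_rfl, hc.2⟩ ⟨h.le, hx.2⟩ h
  refine ⟨fun hmin => ?_, ?_⟩
  · by_contra hyc
    exact (hlt y hy hyc).not_ge (isMinOn_iff.1 hmin c hc)
  · rintro rfl
    refine isMinOn_iff.2 fun x hx => ?_
    rcases eq_or_ne x y with rfl | hxy
    · exact le_rfl
    · exact (hlt x hx hxy).le

theorem existsUnique_isMinOn_Icc_of_hasDerivAt_mul {f g k : ℝ → ℝ} {a b : ℝ} (hab : a ≤ b)
    (hf : ContinuousOn f (Icc a b)) (hf' : ∀ x ∈ Ioo a b, HasDerivAt f (k x * g x) x)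
    (hk : ∀ x ∈ Ioo a b, 0 < k x) (hg : StrictMonoOn g (Icc a b))
    (hgc : ContinuousOn g (Icc a b)) (ha : g a < 0) (hb : 0 < g b) :
    ∃! c, c ∈ Ioo a b ∧ IsMinOn f (Icc a b) c := by
  obtain ⟨c, hc, hgc0⟩ := intermediate_value_Icc hab hgc ⟨ha.le, hb.le⟩
  have hac : a < c := hc.1.lt_of_ne (by rintro rfl; linarith)
  have hcb : c < b := hc.2.lt_of_ne (by rintro rfl; linarith)
  have hanti : StrictAntiOn f (Icc a c) := by
    refine strictAntiOn_of_hasDerivWithinAt_neg (f' := fun x => k x * g x) (convex_Icc a c)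
      (hf.mono (Icc_subset_Icc_right hc.2)) (fun x hx => ?_) (fun x hx => ?_) <;>
      rw [interior_Icc] at hx <;> have hxab : x ∈ Ioo a b := ⟨hx.1, hx.2.trans hcb⟩
    · exact (hf' x hxab).hasDerivWithinAt
    · have : g x < 0 := hgc0 ▸ hg (Ioo_subset_Icc_self hxab) hc hx.2
      exact mul_neg_of_pos_of_neg (hk x hxab) this
  have hmono : StrictMonoOn f (Icc c b) := by
    refine strictMonoOn_of_hasDerivWithinAt_pos (f' := fun x => k x * g x) (convex_Icc c b)
      (hf.mono (Icc_subset_Icc_left hc.1)) (fun x hx => ?_) (fun x hx => ?_) <;>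
      rw [interior_Icc] at hx <;> have hxab : x ∈ Ioo a b := ⟨hac.trans hx.1, hx.2⟩
    · exact (hf' x hxab).hasDerivWithinAt
    · have : 0 < g x := hgc0 ▸ hg hc (Ioo_subset_Icc_self hxab) hx.1
      exact mul_pos (hk x hxab) this
  have hmin := fun y (hy : y ∈ Icc a b) =>
    isMinOn_Icc_iff_of_strictAntiOn_of_strictMonoOn hc hanti hmono hy
  exact ⟨c, ⟨⟨hac, hcb⟩, (hmin c hc).2 rfl⟩,
    fun y ⟨hy, hymin⟩ => (hmin y (Ioo_subset_Icc_self hy)).1 hymin⟩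

namespace RMq

noncomputable def R (M q γ : ℝ) : ℝ :=
  2 / q * arctan (q * γ) + 2 * (1 - γ) ^ 3 / (M ^ 2 + (1 - γ) ^ 2)

def phi (M q γ : ℝ) : ℝ :=
  M ^ 4 - M ^ 2 * (1 - γ) ^ 2 - q ^ 2 * γ ^ 2 * (1 - γ) ^ 4
    - 3 * M ^ 2 * q ^ 2 * γ ^ 2 * (1 - γ) ^ 2

theorem hasDerivAt_phi (M q x : ℝ) :
    HasDerivAt (phi M q) (2 * (1 - x) * (M ^ 2 - q ^ 2 * (x * (1 - x) ^ 2 * (1 - 3 * x))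
      - 3 * M ^ 2 * q ^ 2 * (x * (1 - 2 * x)))) x := by
  have hid := hasDerivAt_id' x
  have hsub := (hasDerivAt_id' x).const_sub 1
  have := (((hasDerivAt_const x (M ^ 4)).sub ((hsub.pow 2).const_mul (M ^ 2))).sub
    (((hid.pow 2).const_mul (q ^ 2)).mul (hsub.pow 4))).sub
    (((hid.pow 2).const_mul (3 * M ^ 2 * q ^ 2)).mul (hsub.pow 2))
  exact this.congr_deriv (by simp only [Pi.pow_apply]; push_cast; ring)

theorem strictMonoOn_phi {M q : ℝ} (hM : M ≠ 0) (hq1 : q ^ 2 ≤ 1) (hq2M : q ^ 2 ≤ 4 * M ^ 2) :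
    StrictMonoOn (phi M q) (Iic 1) := by
  refine strictMonoOn_of_hasDerivWithinAt_pos (convex_Iic 1)
    (fun x _ => (hasDerivAt_phi M q x).continuousAt.continuousWithinAt)
    (fun x _ => (hasDerivAt_phi M q x).hasDerivWithinAt) fun x hx => ?_
  rw [interior_Iic, mem_Iio] at hx
  -- With `q ^ 2 ≤ 4 * M ^ 2` and `q ^ 2 ≤ 1` the bracket in `φ'` exceeds `M ^ 2 * (1 - 1/3 - 3/8)`.
  have hquartic : x * (1 - x) ^ 2 * (1 - 3 * x) ≤ 1 / 12 := by
    nlinarith [sq_nonneg (x * (1 - x)), sq_nonneg (3 * x - 1), sq_nonneg x,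
      sq_nonneg (6 * x ^ 2 - 4 * x), sq_nonneg (x - 1 / 6), sq_nonneg (x * (x - 1) + 1 / 6)]
  have hquadratic : x * (1 - 2 * x) ≤ 1 / 8 := by nlinarith [sq_nonneg (4 * x - 1)]
  have hM2 : 0 < M ^ 2 := sq_pos_of_ne_zero hM
  have : 0 < M ^ 2 - q ^ 2 * (x * (1 - x) ^ 2 * (1 - 3 * x))
      - 3 * M ^ 2 * q ^ 2 * (x * (1 - 2 * x)) := by
    nlinarith [mul_le_mul_of_nonneg_left hquartic (sq_nonneg q),
      mul_le_mul_of_nonneg_left hquadratic (mul_nonneg hM2.le (sq_nonneg q))]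
  have : 0 < 1 - x := by linarith
  positivity

theorem hasDerivAt_R {M q : ℝ} (hM : M ≠ 0) (hq : q ≠ 0) (x : ℝ) :
    HasDerivAt (R M q) (2 / ((1 + q ^ 2 * x ^ 2) * (M ^ 2 + (1 - x) ^ 2) ^ 2) * phi M q x) x := by
  have hsub := (hasDerivAt_id' x).const_sub 1
  have hden : M ^ 2 + (1 - x) ^ 2 ≠ 0 := by positivity
  have := ((((hasDerivAt_id' x).const_mul q).arctan).const_mul (2 / q)).add
    (((hsub.pow 3).const_mul 2).div ((hsub.pow 2).const_add (M ^ 2)) hden)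
  refine this.congr_deriv ?_
  have : 1 + (q * x) ^ 2 ≠ 0 := by positivity
  simp only [Pi.pow_apply, phi]
  field_simp
  ring

end RMq

/-- For M ∈ (0,1), q ∈ (0,1] with 2M ≥ q, the function
R_{M;q}(γ) = (2/q) arctan(qγ) + 2(1−γ)³/(M²+(1−γ)²) has a unique minimizer
γ* ∈ (0,1) over [0,1]. -/
theorem R_unique_minimizer (M q : ℝ) (hM0 : 0 < M) (hM1 : M < 1)
    (hq0 : 0 < q) (hq1 : q ≤ 1) (h2M : q ≤ 2 * M)
    (R : ℝ → ℝ)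
    (hR : ∀ γ, R γ = 2 / q * Real.arctan (q * γ)
        + 2 * (1 - γ)^3 / (M^2 + (1 - γ)^2)) :
    ∃! γ : ℝ, γ ∈ Set.Ioo (0:ℝ) 1 ∧ ∀ x ∈ Set.Icc (0:ℝ) 1, R γ ≤ R x := by
  obtain rfl : R = RMq.R M q := funext hR
  have hR' := RMq.hasDerivAt_R hM0.ne' hq0.ne'
  have hphi0 : RMq.phi M q 0 < 0 := by
    have : M ^ 2 < 1 := by nlinarith
    norm_num [RMq.phi]
    nlinarith [mul_lt_mul_of_pos_left this (pow_pos hM0 2)]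
  have hphi1 : 0 < RMq.phi M q 1 := by norm_num [RMq.phi]; positivity
  have hphi : StrictMonoOn (RMq.phi M q) (Icc 0 1) :=
    (RMq.strictMonoOn_phi hM0.ne' (by nlinarith) (by nlinarith)).mono Icc_subset_Iic_self
  simpa only [isMinOn_iff] using existsUnique_isMinOn_Icc_of_hasDerivAt_mul zero_le_one
    (fun x _ => (hR' x).continuousAt.continuousWithinAt) (fun x _ => hR' x)
    (fun x _ => by positivity) hphi
    (fun x _ => (RMq.hasDerivAt_phi M q x).continuousAt.continuousWithinAt) hphi0 hphi1
end

section
/- Let M ≥ 1, q ∈ (0,1] with 2M ≥ q, and define R_{M;q}(γ) = (2/q) arctan(qγ) + 2(1−γ)³/(M² + (1−γ)²). Then R_{M;q} attains its minimum over [0,1] uniquely at γ = 0, with minimal value 2/(1+M²). -/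
/-! The derivative of `R_{M;q}` at `γ` is `2 φ_{M;q}(γ) / ((1 + q²γ²)(M² + (1 - γ)²)²)`, and for
`γ ∈ (0, 1)` the polynomial `φ_{M;q}(γ)` exceeds `φ_{M;q}(0) = M²(M² - 1) ≥ 0` by at least
`γ (M² - γ (1 - γ)⁴) > 0`, using `q² ≤ 1`, `M² ≥ 1` and `2 - γ - 3γ(1 - γ)² ≥ 1`.
So `R_{M;q}` is strictly increasing on `[0, 1]`. -/

open Real Set

noncomputable section

def phi (M q γ : ℝ) : ℝ :=
  M ^ 4 - M ^ 2 * (1 - γ) ^ 2 - q ^ 2 * γ ^ 2 * (1 - γ) ^ 4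
    - 3 * M ^ 2 * q ^ 2 * γ ^ 2 * (1 - γ) ^ 2

lemma one_le_two_sub_sub_mul_one_sub_sq {γ : ℝ} (h1 : γ ≤ 1) :
    1 ≤ 2 - γ - 3 * γ * (1 - γ) ^ 2 := by
  nlinarith [mul_nonneg (sub_nonneg.2 h1) (sq_nonneg (3 * γ - 3 / 2))]

lemma phi_pos {M q γ : ℝ} (hM : 1 ≤ M ^ 2) (hq : q ^ 2 ≤ 1) (hγ : γ ∈ Ioo 0 1) :
    0 < phi M q γ := by
  obtain ⟨h0, h1⟩ := hγ
  have hu : 0 ≤ (1 - γ) ^ 2 := sq_nonneg _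
  have hu_le : (1 - γ) ^ 2 ≤ 1 := by nlinarith
  have hqγ : q ^ 2 * γ ^ 2 ≤ γ ^ 2 := by nlinarith [sq_nonneg γ]
  have hdrop_q : γ * (M ^ 2 * (2 - γ - 3 * γ * (1 - γ) ^ 2) - γ * (1 - γ) ^ 4) ≤ phi M q γ := by
    unfold phi
    nlinarith [mul_nonneg (sub_nonneg.2 hqγ)
        (mul_nonneg hu (add_nonneg hu (by positivity : 0 ≤ 3 * M ^ 2))),
      mul_nonneg (sq_nonneg M) (sub_nonneg.2 hM)]
  have hbracket : 0 < M ^ 2 * (2 - γ - 3 * γ * (1 - γ) ^ 2) - γ * (1 - γ) ^ 4 := by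
    have hu4 : γ * (1 - γ) ^ 4 < 1 := by nlinarith [mul_le_mul hu_le hu_le hu zero_le_one]
    nlinarith [one_le_two_sub_sub_mul_one_sub_sq h1.le]
  exact (mul_pos h0 hbracket).trans_le hdrop_q

lemma hasDerivAt_arctan_add_div {M q : ℝ} (hM : M ≠ 0) (hq : q ≠ 0) (γ : ℝ) :
    HasDerivAt (fun γ => 2 / q * arctan (q * γ) + 2 * (1 - γ) ^ 3 / (M ^ 2 + (1 - γ) ^ 2))
      (2 * phi M q γ / ((1 + (q * γ) ^ 2) * (M ^ 2 + (1 - γ) ^ 2) ^ 2)) γ := by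
  have hden : M ^ 2 + (1 - γ) ^ 2 ≠ 0 := by positivity
  have harctan : HasDerivAt (fun γ => arctan (q * γ)) (1 / (1 + (q * γ) ^ 2) * q) γ :=
    (hasDerivAt_arctan (q * γ)).comp γ ((hasDerivAt_id γ).const_mul q |>.congr_deriv (mul_one q))
  have hsub : HasDerivAt (fun γ : ℝ => 1 - γ) (-1) γ := by
    simpa using (hasDerivAt_id γ).const_sub 1
  have hfrac := ((hsub.fun_pow 3).const_mul 2).fun_div ((hsub.fun_pow 2).const_add (M ^ 2)) hden
  refine ((harctan.const_mul (2 / q)).fun_add hfrac).congr_deriv ?_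
  have : 1 + (q * γ) ^ 2 ≠ 0 := by positivity
  field_simp
  unfold phi
  ring

end

theorem R_min_at_zero_general (M q : ℝ) (hM : 1 ≤ M) (hq0 : 0 < q) (hq1 : q ≤ 1)
    (R : ℝ → ℝ)
    (hR : ∀ γ, R γ = 2 / q * Real.arctan (q * γ)
        + 2 * (1 - γ)^3 / (M^2 + (1 - γ)^2)) :
    R 0 = 2 / (1 + M^2) ∧ (∀ x ∈ Set.Icc (0:ℝ) 1, R 0 ≤ R x) ∧
      ∀ x ∈ Set.Icc (0:ℝ) 1, x ≠ 0 → R 0 < R x := by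
  obtain rfl : R = _ := funext hR
  have hderiv := hasDerivAt_arctan_add_div (by positivity : M ≠ 0) hq0.ne'
  have hmono : StrictMonoOn (fun γ => 2 / q * arctan (q * γ)
      + 2 * (1 - γ) ^ 3 / (M ^ 2 + (1 - γ) ^ 2)) (Icc 0 1) := by
    refine strictMonoOn_of_deriv_pos (convex_Icc 0 1)
      (fun x _ => (hderiv x).continuousAt.continuousWithinAt) fun γ hγ => ?_
    rw [interior_Icc] at hγ
    rw [(hderiv γ).deriv]
    have := phi_pos (show 1 ≤ M ^ 2 by nlinarith) (show q ^ 2 ≤ 1 by nlinarith) hγ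
    positivity
  refine ⟨by norm_num [add_comm], fun x hx => ?_, fun x hx hx0 => ?_⟩
  · exact hmono.monotoneOn (left_mem_Icc.2 zero_le_one) hx hx.1
  · exact hmono (left_mem_Icc.2 zero_le_one) hx (hx.1.lt_of_ne' hx0)

/-- For M ≥ 1, q ∈ (0,1] with 2M ≥ q, the function
R_{M;q}(γ) = (2/q) arctan(qγ) + 2(1−γ)³/(M²+(1−γ)²) attains its minimum over
[0,1] uniquely at γ = 0, with minimal value 2/(1+M²). -/
theorem R_min_at_zero (M q : ℝ) (hM : 1 ≤ M) (hq0 : 0 < q) (hq1 : q ≤ 1)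
    (h2M : q ≤ 2 * M)
    (R : ℝ → ℝ)
    (hR : ∀ γ, R γ = 2 / q * Real.arctan (q * γ)
        + 2 * (1 - γ)^3 / (M^2 + (1 - γ)^2)) :
    R 0 = 2 / (1 + M^2) ∧ (∀ x ∈ Set.Icc (0:ℝ) 1, R 0 ≤ R x) ∧
      ∀ x ∈ Set.Icc (0:ℝ) 1, x ≠ 0 → R 0 < R x :=
  R_min_at_zero_general M q hM hq0 hq1 R hR
end

section
/- Let q > 0 and 0 ≤ α ≤ β. Then ∫_α^β r/(1 + q²(r−β)²) dr ≥ ∫_α^β r/(1 + q²(r−α)²) dr, with equality if and only if α = β. -/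
/-!
Both integrals have elementary primitives, `log (1 + q²(r-c)²) / (2q²) + (c/q) arctan (q(r-c))`,
and their difference collapses to `φ(q(β-α)) / q²` with `φ t = t arctan t - log (1 + t²)`
(`radialDefect` below). The function `φ` is even, vanishes at `0`, and has derivative
`arctan t - t/(1+t²)`, which is positive for `t > 0` because its own derivative is
`2t²/(1+t²)²`. Hence `φ t > 0` for `t ≠ 0`, whatever the order of `α` and `β`.
-/

open Real Set

noncomputable def radialDefect (t : ℝ) : ℝ := t * arctan t - log (1 + t ^ 2)

lemma pos_of_hasDerivAt_of_pos {f f' : ℝ → ℝ} (hf : ∀ x, HasDerivAt f (f' x) x)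
    (hf' : ∀ x, 0 < x → 0 < f' x) (h0 : f 0 = 0) {t : ℝ} (ht : 0 < t) : 0 < f t := by
  have hmono : StrictMonoOn f (Ici 0) :=
    strictMonoOn_of_hasDerivWithinAt_pos (convex_Ici 0)
      (fun x _ => (hf x).continuousAt.continuousWithinAt) (fun x _ => (hf x).hasDerivWithinAt)
      (fun x hx => hf' x (by simpa using hx))
  simpa [h0] using hmono self_mem_Ici ht.le ht

lemma div_one_add_sq_lt_arctan {t : ℝ} (ht : 0 < t) : t / (1 + t ^ 2) < arctan t := by
  have hden : ∀ x : ℝ, 1 + x ^ 2 ≠ 0 := fun x => by positivity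
  have hderiv (x : ℝ) : HasDerivAt (fun s => arctan s - s / (1 + s ^ 2))
      (2 * x ^ 2 / (1 + x ^ 2) ^ 2) x := by
    have h := (hasDerivAt_arctan x).fun_sub
      ((hasDerivAt_id' x).fun_div (((hasDerivAt_id' x).fun_pow 2).const_add 1) (hden x))
    refine h.congr_deriv ?_
    field_simp
    ring
  have hpos : ∀ x : ℝ, 0 < x → 0 < 2 * x ^ 2 / (1 + x ^ 2) ^ 2 := fun x hx => by positivity
  exact sub_pos.mp (pos_of_hasDerivAt_of_pos hderiv hpos (by simp) ht)

lemma radialDefect_pos_of_pos {t : ℝ} (ht : 0 < t) : 0 < radialDefect t := by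
  have hden : ∀ x : ℝ, 1 + x ^ 2 ≠ 0 := fun x => by positivity
  have hderiv (x : ℝ) : HasDerivAt radialDefect (arctan x - x / (1 + x ^ 2)) x := by
    have h := ((hasDerivAt_id' x).fun_mul (hasDerivAt_arctan x)).fun_sub
      ((((hasDerivAt_id' x).fun_pow 2).const_add 1).log (hden x))
    refine h.congr_deriv ?_
    field_simp
    ring
  exact pos_of_hasDerivAt_of_pos hderiv (fun x hx => sub_pos.mpr (div_one_add_sq_lt_arctan hx))
    (by simp [radialDefect]) ht

lemma radialDefect_neg (t : ℝ) : radialDefect (-t) = radialDefect t := by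
  simp [radialDefect, arctan_neg]

lemma radialDefect_pos {t : ℝ} (ht : t ≠ 0) : 0 < radialDefect t := by
  rcases ht.lt_or_gt with ht | ht
  · simpa [radialDefect_neg] using radialDefect_pos_of_pos (neg_pos.mpr ht)
  · exact radialDefect_pos_of_pos ht

lemma radialDefect_eq_zero_iff {t : ℝ} : radialDefect t = 0 ↔ t = 0 := by
  refine ⟨fun h => ?_, fun h => by simp [h, radialDefect]⟩
  by_contra ht
  exact (radialDefect_pos ht).ne' h

lemma radialDefect_nonneg (t : ℝ) : 0 ≤ radialDefect t := by
  rcases eq_or_ne t 0 with rfl | ht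
  · simp [radialDefect]
  · exact (radialDefect_pos ht).le

lemma integral_div_one_add_sq_mul_sub_sq {q : ℝ} (hq : q ≠ 0) (c a b : ℝ) :
    ∫ r in a..b, r / (1 + q ^ 2 * (r - c) ^ 2) =
      (log (1 + q ^ 2 * (b - c) ^ 2) / (2 * q ^ 2) + c / q * arctan (q * (b - c))) -
        (log (1 + q ^ 2 * (a - c) ^ 2) / (2 * q ^ 2) + c / q * arctan (q * (a - c))) := by
  have hden : ∀ x : ℝ, 1 + q ^ 2 * (x - c) ^ 2 ≠ 0 := fun x => by positivity
  apply intervalIntegral.integral_eq_sub_of_hasDerivAt (fun x _ => ?_)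
  · apply Continuous.intervalIntegrable
    fun_prop (disch := exact hden _)
  have hlog := (((((hasDerivAt_id' x).sub_const c).fun_pow 2).const_mul (q ^ 2)).const_add 1).log
    (hden x)
  have harctan := (((hasDerivAt_id' x).sub_const c).const_mul q).arctan
  convert (hlog.div_const (2 * q ^ 2)).fun_add (harctan.const_mul (c / q)) using 1
  field_simp [hden x]
  ring

lemma integral_sub_integral_eq_radialDefect {q : ℝ} (hq : q ≠ 0) (α β : ℝ) :
    (∫ r in α..β, r / (1 + q ^ 2 * (r - β) ^ 2)) - ∫ r in α..β, r / (1 + q ^ 2 * (r - α) ^ 2) =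
      radialDefect (q * (β - α)) / q ^ 2 := by
  have harctan : q * (α - β) = -(q * (β - α)) := by ring
  have hlog : q ^ 2 * (α - β) ^ 2 = q ^ 2 * (β - α) ^ 2 := by ring
  rw [integral_div_one_add_sq_mul_sub_sq hq, integral_div_one_add_sq_mul_sub_sq hq, radialDefect,
    mul_pow, harctan, hlog, arctan_neg]
  simp only [sub_self, mul_zero, zero_pow two_ne_zero, add_zero, log_one, arctan_zero, zero_div]
  field_simp
  ring

theorem radial_parallelogram_rule_general (q α β : ℝ) (hq : 0 < q) :
    (∫ r in α..β, r / (1 + q^2 * (r - α)^2)) ≤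
        (∫ r in α..β, r / (1 + q^2 * (r - β)^2)) ∧
      ((∫ r in α..β, r / (1 + q^2 * (r - β)^2)) =
          (∫ r in α..β, r / (1 + q^2 * (r - α)^2)) ↔ α = β) := by
  have hdiff := integral_sub_integral_eq_radialDefect hq.ne' α β
  constructor
  · rw [← sub_nonneg, hdiff]
    exact div_nonneg (radialDefect_nonneg _) (sq_nonneg q)
  · rw [← sub_eq_zero, hdiff, div_eq_zero_iff, radialDefect_eq_zero_iff, mul_eq_zero, sub_eq_zero]
    simp [hq.ne', eq_comm]

/-- Radial parallelogram rule: for q > 0 and 0 ≤ α ≤ β,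
∫_α^β r/(1+q²(r−β)²) dr ≥ ∫_α^β r/(1+q²(r−α)²) dr, with equality iff α = β. -/
theorem radial_parallelogram_rule (q α β : ℝ) (hq : 0 < q) (hα : 0 ≤ α)
    (hαβ : α ≤ β) :
    (∫ r in α..β, r / (1 + q^2 * (r - α)^2)) ≤
        (∫ r in α..β, r / (1 + q^2 * (r - β)^2)) ∧
      ((∫ r in α..β, r / (1 + q^2 * (r - β)^2)) =
          (∫ r in α..β, r / (1 + q^2 * (r - α)^2)) ↔ α = β) :=
  radial_parallelogram_rule_general q α β hq
end

section
/- Let Ω ⊂ ℝⁿ be an open bounded convex set, q ≥ 0 with q·diam(Ω) ≤ 2, and let u : Ω → ℝ be q-concave (i.e., x ↦ u(x) − (q/2)|x|² is concave). Then u satisfies the single shock property: for a.e. x ∈ Ω and every τ > 0 with x − τ∇u(x) ∈ Ω, one has u(x − τ∇u(x)) ≤ u(x) + (τ/2)(1 − |∇u(x)|²). -/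
/-!
Concave functions are locally Lipschitz on open sets, so by Rademacher's theorem `u` is
differentiable almost everywhere in `Ω`. At such a point `x`, with `g = ∇u x`, the concave
function `u - (q/2)‖·‖²` lies below its tangent plane; adding `(q/2)‖·‖²` back gives
`u y ≤ u x + ⟪g, y - x⟫ + (q/2)‖y - x‖²` for `y ∈ Ω`. At `y = x - τ g` this reads
`u y ≤ u x - τ‖g‖² + (q/2)(τ‖g‖)²`, and since `τ‖g‖ = ‖y - x‖ ≤ diam Ω ≤ 2/q` the quadratic
term is at most `τ‖g‖`. Finally `τ‖g‖ - τ‖g‖² ≤ (τ/2)(1 - ‖g‖²)` is `(τ/2)(1 - ‖g‖)² ≥ 0`.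
-/

open MeasureTheory

open scoped RealInnerProductSpace

section Rademacher

variable {E F : Type*} [NormedAddCommGroup E] [NormedSpace ℝ E] [FiniteDimensional ℝ E]
  [MeasurableSpace E] [BorelSpace E] [NormedAddCommGroup F] [NormedSpace ℝ F]
  [FiniteDimensional ℝ F] {μ : Measure E} [μ.IsAddHaarMeasure] {s : Set E} {f : E → F}

theorem LocallyLipschitzOn.ae_differentiableAt_of_mem (hs : IsOpen s)
    (hf : LocallyLipschitzOn s f) : ∀ᵐ x ∂μ, x ∈ s → DifferentiableAt ℝ f x := by
  rw [ae_iff]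
  refine measure_null_of_locally_null _ fun x hx => ?_
  obtain ⟨hxs, -⟩ := Classical.not_imp.1 hx
  obtain ⟨K, t, ht, hK⟩ := hf hxs
  rw [hs.nhdsWithin_eq hxs] at ht
  refine ⟨_ ∩ interior t, inter_mem_nhdsWithin _ (interior_mem_nhds.2 ht),
    measure_mono_null ?_ (ae_iff.1 (hK.mono interior_subset).ae_differentiableWithinAt_of_mem)⟩
  rintro z ⟨hz, hzt⟩ hdiff
  exact hz fun _ => (hdiff hzt).differentiableAt (isOpen_interior.mem_nhds hzt)

end Rademacher

theorem ConcaveOn.le_add_fderiv {E : Type*} [NormedAddCommGroup E] [NormedSpace ℝ E]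
    {s : Set E} {f : E → ℝ} {f' : E →L[ℝ] ℝ} {x y : E} (hf : ConcaveOn ℝ s f)
    (hx : x ∈ s) (hy : y ∈ s) (hf' : HasFDerivAt f f' x) :
    f y ≤ f x + f' (y - x) := by
  let ℓ := AffineMap.lineMap (k := ℝ) x y
  have hline : ConcaveOn ℝ (ℓ ⁻¹' s) (f ∘ ℓ) := hf.comp_affineMap ℓ
  have hderiv : HasDerivAt (f ∘ ℓ) (f' (y - x)) 0 := by
    have hf'0 : HasFDerivAt f f' (ℓ 0) := by simpa [ℓ] using hf'
    exact hf'0.comp_hasDerivAt 0 AffineMap.hasDerivAt_lineMap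
  have hslope := hline.slope_le_of_hasDerivAt (by simpa [ℓ] using hx) (by simpa [ℓ] using hy)
    zero_lt_one hderiv
  simp only [slope_def_field, Function.comp_apply, ℓ, AffineMap.lineMap_apply_zero,
    AffineMap.lineMap_apply_one, sub_zero, div_one] at hslope
  linarith

def QConcaveOn {E : Type*} [NormedAddCommGroup E] [InnerProductSpace ℝ E]
    (q : ℝ) (s : Set E) (u : E → ℝ) : Prop :=
  ConcaveOn ℝ s fun x => u x - q / 2 * ‖x‖ ^ 2

namespace QConcaveOn

variable {E : Type*} [NormedAddCommGroup E] [InnerProductSpace ℝ E] {q : ℝ} {s : Set E}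
  {u : E → ℝ}

theorem le_add_inner_add_sq [CompleteSpace E] {g x y : E} (hu : QConcaveOn q s u)
    (hx : x ∈ s) (hy : y ∈ s) (hg : HasGradientAt u g x) :
    u y ≤ u x + ⟪g, y - x⟫ + q / 2 * ‖y - x‖ ^ 2 := by
  have hv : HasFDerivAt (fun z => u z - q / 2 * ‖z‖ ^ 2)
      (InnerProductSpace.toDual ℝ E g - (q / 2) • (2 • innerSL ℝ x)) x :=
    hg.hasFDerivAt.sub ((hasStrictFDerivAt_norm_sq x).hasFDerivAt.const_mul (q / 2))
  have htangent := ConcaveOn.le_add_fderiv hu hx hy hv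
  simp only [sub_apply, InnerProductSpace.toDual_apply_apply, smul_apply, innerSL_apply_apply,
    smul_eq_mul, nsmul_eq_mul, Nat.cast_ofNat, inner_sub_right, real_inner_self_eq_norm_sq]
    at htangent ⊢
  rw [norm_sub_sq_real, real_inner_comm x y]
  linarith

theorem ae_differentiableAt_of_mem [FiniteDimensional ℝ E] [MeasurableSpace E] [BorelSpace E]
    {μ : Measure E} [μ.IsAddHaarMeasure] (hu : QConcaveOn q s u) (hs : IsOpen s) :
    ∀ᵐ x ∂μ, x ∈ s → DifferentiableAt ℝ u x := by
  filter_upwards [(ConcaveOn.locallyLipschitzOn hs hu).ae_differentiableAt_of_mem hs]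
    with x hx hxs
  have hsq : DifferentiableAt ℝ (fun z : E => q / 2 * ‖z‖ ^ 2) x :=
    (hasStrictFDerivAt_norm_sq x).differentiableAt.const_mul _
  simpa [Pi.add_def] using (hx hxs).add hsq

end QConcaveOn

theorem qconcave_single_shock_general (n : ℕ) (Ω : Set (EuclideanSpace ℝ (Fin n)))
    (hopen : IsOpen Ω) (hbdd : Bornology.IsBounded Ω)
    (q : ℝ) (hq : 0 ≤ q) (hdiam : q * Metric.diam Ω ≤ 2)
    (u : EuclideanSpace ℝ (Fin n) → ℝ)
    (hconc : ConcaveOn ℝ Ω (fun x => u x - q / 2 * ‖x‖^2)) :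
    ∀ᵐ x ∂(volume : Measure (EuclideanSpace ℝ (Fin n))), x ∈ Ω →
      DifferentiableAt ℝ u x ∧
      ∀ τ : ℝ, 0 < τ → x - τ • gradient u x ∈ Ω →
        u (x - τ • gradient u x) ≤ u x + τ / 2 * (1 - ‖gradient u x‖^2) := by
  have hu : QConcaveOn q Ω u := hconc
  filter_upwards [hu.ae_differentiableAt_of_mem hopen] with x hdiff hx
  refine ⟨hdiff hx, fun τ hτ hy => ?_⟩
  set g := gradient u x
  have hbound := hu.le_add_inner_add_sq hx hy (hdiff hx).hasGradientAt
  have hstep : x - τ • g - x = -(τ • g) := by abel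
  have hnorm : ‖x - τ • g - x‖ = τ * ‖g‖ := by
    rw [hstep, norm_neg, norm_smul, Real.norm_of_nonneg hτ.le]
  have hinner : ⟪g, x - τ • g - x⟫ = -(τ * ‖g‖ ^ 2) := by
    rw [hstep, inner_neg_right, real_inner_smul_right, real_inner_self_eq_norm_sq]
  have hdist : q * (τ * ‖g‖) ≤ 2 := by
    rw [← hnorm, ← dist_eq_norm]
    exact (mul_le_mul_of_nonneg_left (Metric.dist_le_diam_of_mem hbdd hy hx) hq).trans hdiam
  rw [hinner, hnorm] at hbound
  calc u (x - τ • g) ≤ u x - τ * ‖g‖ ^ 2 + q / 2 * (τ * ‖g‖) ^ 2 := by linarith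
    _ ≤ u x - τ * ‖g‖ ^ 2 + τ * ‖g‖ := by
      nlinarith [mul_le_mul_of_nonneg_right hdist (mul_nonneg hτ.le (norm_nonneg g))]
    _ ≤ u x + τ / 2 * (1 - ‖g‖ ^ 2) := by nlinarith [mul_nonneg hτ.le (sq_nonneg (‖g‖ - 1))]

/-- A q-concave function on a bounded open convex set Ω ⊂ ℝⁿ with
q·diam(Ω) ≤ 2 has the single shock property: it is a.e. differentiable
and u(x − τ∇u(x)) ≤ u(x) + (τ/2)(1 − |∇u(x)|²) a.e. in Ω for all admissible
τ > 0. -/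
theorem qconcave_single_shock (n : ℕ) (Ω : Set (EuclideanSpace ℝ (Fin n)))
    (hopen : IsOpen Ω) (hbdd : Bornology.IsBounded Ω) (hconv : Convex ℝ Ω)
    (q : ℝ) (hq : 0 ≤ q) (hdiam : q * Metric.diam Ω ≤ 2)
    (u : EuclideanSpace ℝ (Fin n) → ℝ)
    (hconc : ConcaveOn ℝ Ω (fun x => u x - q / 2 * ‖x‖^2)) :
    ∀ᵐ x ∂(volume : Measure (EuclideanSpace ℝ (Fin n))), x ∈ Ω →
      DifferentiableAt ℝ u x ∧
      ∀ τ : ℝ, 0 < τ → x - τ • gradient u x ∈ Ω →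
        u (x - τ • gradient u x) ≤ u x + τ / 2 * (1 - ‖gradient u x‖^2) :=
  qconcave_single_shock_general n Ω hopen hbdd q hq hdiam u hconc
end

section
/- Let a < b and let u : [a,b] → ℝ be a concave, nonincreasing, continuous function with u(a) > u(b). Then there exists c ∈ [a,b) with u(a) − u(b) ≥ b − c such that ∫_a^b dx/(1+u'(x)²) ≥ ∫_a^b dx/(1 + (v')²), where v is the function equal to u(a) on [a,c] and equal to the affine function interpolating (c, u(a)) and (b, u(b)) on (c,b]. -/
/-!
Take `c = max a (b - (u a - u b))`, so that the steep part of the profile has slope `m ≤ -1`, and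
`m = -1` when `c > a`. On `t ≤ 0` the function `t ↦ 1 / (1 + t ^ 2)` lies above its tangent line
`L` at `m`, so `∫ 1 / (1 + u' ^ 2) ≥ ∫ L (u')`. As `L` is increasing and affine and
`∫ u' ≥ u b - u a = ∫ v'`, this is at least `∫ L (v') = ∫ 1 / (1 + v' ^ 2)`: the tangent touches
the graph at `m`, and also passes through `(0, 1)` when `m = -1`.
-/

open MeasureTheory Set

-- `-2 * m / (1 + m ^ 2) ^ 2` is the derivative of `t ↦ 1 / (1 + t ^ 2)` at `m`; the gap below is
-- `(t - m) ^ 2 * (m ^ 2 - 1 + 2 * m * t) / ((1 + t ^ 2) * (1 + m ^ 2) ^ 2)`.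
lemma one_div_one_add_sq_tangent_le {m t : ℝ} (hm : m ≤ -1) (ht : t ≤ 0) :
    1 / (1 + m ^ 2) + -2 * m / (1 + m ^ 2) ^ 2 * (t - m) ≤ 1 / (1 + t ^ 2) := by
  have gap : 1 / (1 + t ^ 2) - (1 / (1 + m ^ 2) + -2 * m / (1 + m ^ 2) ^ 2 * (t - m)) =
      (t - m) ^ 2 * (m ^ 2 - 1 + 2 * m * t) / ((1 + t ^ 2) * (1 + m ^ 2) ^ 2) := by
    field_simp
    ring
  have hnum : 0 ≤ m ^ 2 - 1 + 2 * m * t := by nlinarith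
  have : 0 ≤ (t - m) ^ 2 * (m ^ 2 - 1 + 2 * m * t) / ((1 + t ^ 2) * (1 + m ^ 2) ^ 2) := by
    positivity
  linarith

lemma integral_comp_ite_le {a b c : ℝ} (hac : a ≤ c) (hcb : c ≤ b) (g : ℝ → ℝ) (p q : ℝ) :
    ∫ x in a..b, g (if x ≤ c then p else q) = (c - a) * g p + (b - c) * g q := by
  have on_left : EqOn (fun x => g (if x ≤ c then p else q)) (fun _ => g p) (uIoc a c) := by
    intro x hx
    rw [uIoc_of_le hac] at hx
    simp [hx.2]
  have on_right : EqOn (fun x => g (if x ≤ c then p else q)) (fun _ => g q) (uIoc c b) := by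
    intro x hx
    rw [uIoc_of_le hcb] at hx
    simp [not_le.2 hx.1]
  rw [← intervalIntegral.integral_add_adjacent_intervals (b := c)
      ((intervalIntegrable_congr on_left).2 intervalIntegrable_const)
      ((intervalIntegrable_congr on_right).2 intervalIntegrable_const),
    intervalIntegral.integral_congr_ae (ae_of_all _ fun x hx => on_left hx),
    intervalIntegral.integral_congr_ae (ae_of_all _ fun x hx => on_right hx)]
  simp

section Antitone

variable {u : ℝ → ℝ} {a b : ℝ}

theorem AntitoneOn.intervalIntegrable_deriv (hu : AntitoneOn u (uIcc a b)) :
    IntervalIntegrable (deriv u) volume a b := by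
  simpa [Pi.neg_def] using hu.neg.intervalIntegrable_deriv.neg

theorem AntitoneOn.sub_le_integral_deriv (hab : a ≤ b) (hu : AntitoneOn u (Icc a b)) :
    u b - u a ≤ ∫ x in a..b, deriv u x := by
  have hle : u b ≤ u a := hu (left_mem_Icc.2 hab) (right_mem_Icc.2 hab) hab
  have h := ((uIcc_of_le hab).symm ▸ hu).neg.intervalIntegral_deriv_mem_uIcc
  simp only [deriv.fun_neg, intervalIntegral.integral_neg] at h
  rw [uIcc_of_le (by linarith), mem_Icc] at h
  linarith [h.2]

theorem AntitoneOn.deriv_nonpos_of_mem_Ioo (hu : AntitoneOn u (Icc a b)) {x : ℝ}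
    (hx : x ∈ Ioo a b) : deriv u x ≤ 0 := by
  rw [← derivWithin_of_mem_nhds (Icc_mem_nhds hx.1 hx.2)]
  exact hu.derivWithin_nonpos

-- The left side is `∫ x in a..b, L (deriv u x)` for the tangent line `L` at `m`, with
-- `∫ x in a..b, deriv u x` replaced by its lower bound `u b - u a`.
theorem AntitoneOn.tangent_le_integral_one_div_one_add_deriv_sq (hab : a ≤ b)
    (hu : AntitoneOn u (Icc a b)) {m : ℝ} (hm : m ≤ -1) :
    (b - a) / (1 + m ^ 2) + -2 * m / (1 + m ^ 2) ^ 2 * (u b - u a - m * (b - a)) ≤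
      ∫ x in a..b, 1 / (1 + deriv u x ^ 2) := by
  have hu' : AntitoneOn u (uIcc a b) := uIcc_of_le hab ▸ hu
  have hslope : 0 ≤ -2 * m / (1 + m ^ 2) ^ 2 := div_nonneg (by linarith) (by positivity)
  have hint : IntervalIntegrable (fun x => 1 / (1 + deriv u x ^ 2)) volume a b := by
    refine intervalIntegrable_const (c := (1 : ℝ)).mono_fun
      (by fun_prop (disch := exact measurable_deriv u) : Measurable _).aestronglyMeasurable
      (ae_of_all _ fun x => ?_)
    dsimp only
    rw [Real.norm_of_nonneg (by positivity), norm_one]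
    exact div_le_one_of_le₀ (le_add_of_nonneg_right (sq_nonneg _)) (by positivity)
  calc (b - a) / (1 + m ^ 2) + -2 * m / (1 + m ^ 2) ^ 2 * (u b - u a - m * (b - a))
      ≤ ∫ x in a..b, (1 / (1 + m ^ 2) + -2 * m / (1 + m ^ 2) ^ 2 * (deriv u x - m)) := by
        rw [intervalIntegral.integral_add intervalIntegrable_const
            ((hu'.intervalIntegrable_deriv.sub intervalIntegrable_const).const_mul _),
          intervalIntegral.integral_const_mul,
          intervalIntegral.integral_sub hu'.intervalIntegrable_deriv intervalIntegrable_const,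
          intervalIntegral.integral_const, intervalIntegral.integral_const, smul_eq_mul,
          smul_eq_mul]
        have := mul_le_mul_of_nonneg_left (hu.sub_le_integral_deriv hab) hslope
        rw [div_eq_mul_one_div (b - a)]
        linarith
    _ ≤ ∫ x in a..b, 1 / (1 + deriv u x ^ 2) :=
        intervalIntegral.integral_mono_on_of_le_Ioo hab
          (intervalIntegrable_const.add
            ((hu'.intervalIntegrable_deriv.sub intervalIntegrable_const).const_mul _))
          hint fun x hx => one_div_one_add_sq_tangent_le hm (hu.deriv_nonpos_of_mem_Ioo hx)

end Antitone

theorem concave_flat_plus_line_general (a b : ℝ) (hab : a < b) (u : ℝ → ℝ)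
    (hmono : AntitoneOn u (Set.Icc a b))
    (hend : u b < u a) :
    ∃ c ∈ Set.Ico a b, b - c ≤ u a - u b ∧
      (∫ x in a..b, 1 / (1 + (if x ≤ c then (0:ℝ)
          else (u b - u a) / (b - c))^2)) ≤
        ∫ x in a..b, 1 / (1 + deriv u x ^ 2) := by
  obtain ⟨c, hc, hflat⟩ : ∃ c, c = max a (b - (u a - u b)) ∧ (c = a ∨ b - c = u a - u b) := by
    refine ⟨_, rfl, ?_⟩
    rcases max_choice a (b - (u a - u b)) with h | h <;> rw [h] <;> simp
  have hac : a ≤ c := hc ▸ le_max_left _ _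
  have hcb : c < b := hc ▸ max_lt hab (by linarith)
  have hdrop : b - c ≤ u a - u b := by linarith [hc ▸ le_max_right a (b - (u a - u b))]
  obtain ⟨m, hm_def⟩ : ∃ m, m = (u b - u a) / (b - c) := ⟨_, rfl⟩
  have hm_mul : m * (b - c) = u b - u a := hm_def ▸ div_mul_cancel₀ _ (by linarith)
  have hm : m ≤ -1 := by rw [hm_def, div_le_iff₀ (by linarith)]; linarith
  refine ⟨c, ⟨hac, hcb⟩, hdrop, ?_⟩
  rw [← hm_def, integral_comp_ite_le hac hcb.le (fun s => 1 / (1 + s ^ 2))]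
  refine le_of_eq_of_le ?_ (hmono.tangent_le_integral_one_div_one_add_deriv_sq hab.le hm)
  rcases hflat with rfl | hflat
  · rw [← hm_mul]; ring
  · obtain rfl : m = -1 := by rw [hm_def, hflat, ← neg_sub, neg_div, div_self (by linarith)]
    rw [← hm_mul]; ring

/-- For a concave nonincreasing continuous u on [a,b] with u(a) > u(b), there
is c ∈ [a,b) with u(a) − u(b) ≥ b − c such that the resistance of u is at
least that of the profile which is flat at height u(a) on [a,c] and affine
from (c,u(a)) to (b,u(b)) on (c,b]. -/
theorem concave_flat_plus_line (a b : ℝ) (hab : a < b) (u : ℝ → ℝ)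
    (hconc : ConcaveOn ℝ (Set.Icc a b) u)
    (hmono : AntitoneOn u (Set.Icc a b))
    (hcont : ContinuousOn u (Set.Icc a b))
    (hend : u b < u a) :
    ∃ c ∈ Set.Ico a b, b - c ≤ u a - u b ∧
      (∫ x in a..b, 1 / (1 + (if x ≤ c then (0:ℝ)
          else (u b - u a) / (b - c))^2)) ≤
        ∫ x in a..b, 1 / (1 + deriv u x ^ 2) :=
  concave_flat_plus_line_general a b hab u hmono hend
end

section
/- Let M > 0, R > 0, and h : (−∞,−1] → ℝ defined by h(t) = −t/(1+t²)². Define φ(a) = −∫_a^R h⁻¹(a/(4r)) dr for a ∈ (0,R). Then φ is strictly decreasing on (0,R), with φ(a) → 0 as a → R and φ(a) → +∞ as a → 0, and consequently there is a unique a_M ∈ (0,R) with φ(a_M) = M. -/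
/-!
Write `u t = h⁻¹ (1 / (4 t))`; it is antitone on `[1, ∞)`, at most `-1`, and tends to `-∞`, and
`φ a = -∫_a^R u (r / a) dr`. Passing from `a` to `b > a` removes `[a, b]`, where the integrand is
at most `-1`, and raises the integrand on `[b, R]`, so `φ a - φ b ≥ b - a`. The substitution
`r = a t` gives `φ a = -a ∫_1^{R/a} u`, which is continuous on `(0, R]` and vanishes at `R`, while
the integral over `[R/2, R]` alone gives `φ a ≥ (R/2) (-u (R / (2a))) → ∞` as `a → 0`. The value
`M` is then taken exactly once by the intermediate value theorem.
-/

open Set Filter Topology MeasureTheory intervalIntegral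

theorem StrictMonoOn.monotoneOn_of_rightInvOn {α β : Type*} [LinearOrder α] [Preorder β]
    {f : α → β} {g : β → α} {s : Set α} {t : Set β} (hf : StrictMonoOn f s) (hg : MapsTo g t s)
    (hfg : RightInvOn g f t) : MonotoneOn g t :=
  fun x hx y hy hxy => (hf.le_iff_le (hg hx) (hg hy)).1 (by rwa [hfg hx, hfg hy])

theorem StrictAntiOn.existsUnique_eq_of_tendsto {α δ : Type*} [ConditionallyCompleteLinearOrder α]
    [TopologicalSpace α] [OrderTopology α] [DenselyOrdered α] [LinearOrder δ]
    [TopologicalSpace δ] [OrderClosedTopology δ] {f : α → δ} {a b : α} {l M : δ} (hab : a < b)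
    (hf : StrictAntiOn f (Ioo a b)) (hcont : ContinuousOn f (Ioo a b))
    (ha : Tendsto f (𝓝[>] a) atTop) (hb : Tendsto f (𝓝[<] b) (𝓝 l)) (hlM : l < M) :
    ∃! x, x ∈ Ioo a b ∧ f x = M := by
  have := nhdsGT_neBot_of_exists_gt ⟨b, hab⟩
  have := nhdsLT_neBot_of_exists_lt ⟨a, hab⟩
  obtain ⟨x₁, hMx₁, hx₁⟩ :=
    ((ha.eventually (eventually_ge_atTop M)).and (Ioo_mem_nhdsGT hab)).exists
  obtain ⟨x₂, hx₂M, hx₂⟩ :=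
    ((hb.eventually (eventually_le_nhds hlM)).and (Ioo_mem_nhdsLT hab)).exists
  obtain ⟨x, hx, hfx⟩ := hcont.surjOn_uIcc hx₁ hx₂ (mem_uIcc.2 (Or.inr ⟨hx₂M, hMx₁⟩))
  exact ⟨x, ⟨hx, hfx⟩, fun y hy => hf.injOn hy.1 hx (hy.2.trans hfx.symm)⟩

theorem AntitoneOn.continuousOn_primitive_Ici {u : ℝ → ℝ} {c : ℝ} (hu : AntitoneOn u (Ici c)) :
    ContinuousOn (fun x => ∫ t in c..x, u t) (Ici c) := by
  intro x hx
  have hcx : c ≤ x + 1 := by linarith [mem_Ici.1 hx]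
  have hint : IntervalIntegrable u volume c (x + 1) :=
    (hu.mono (by rw [uIcc_of_le hcx]; exact Icc_subset_Ici_self)).intervalIntegrable
  refine ((continuousOn_primitive_interval' hint left_mem_uIcc) x ?_).mono_of_mem_nhdsWithin ?_
  · rw [uIcc_of_le hcx]; exact ⟨hx, by linarith⟩
  · rw [uIcc_of_le hcx]
    exact mem_of_superset (inter_mem_nhdsWithin _ (Iio_mem_nhds (lt_add_one x)))
      fun y hy => ⟨hy.1, hy.2.le⟩

theorem strictMonoOn_neg_div_one_add_sq_sq :
    StrictMonoOn (fun t : ℝ => -t / (1 + t ^ 2) ^ 2) (Iic (-1)) := by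
  intro x hx y hy hxy
  simp only [mem_Iic] at hx hy
  rw [div_lt_div_iff₀ (by positivity) (by positivity)]
  have hfactor : y * (1 + x ^ 2) ^ 2 - x * (1 + y ^ 2) ^ 2
      = -((y - x) * (x * y * (x ^ 2 + x * y + y ^ 2 + 2) - 1)) := by ring
  have hxy1 : 1 < x * y := by nlinarith
  have hpos : 0 < (y - x) * (x * y * (x ^ 2 + x * y + y ^ 2 + 2) - 1) :=
    mul_pos (by linarith) (by nlinarith [sq_nonneg (x + y), sq_nonneg (x - y)])
  linarith

theorem tendsto_atBot_of_rightInvOn_neg_div_one_add_sq_sq {g : ℝ → ℝ}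
    (hg : MapsTo g (Ioc 0 (1 / 4)) (Iic (-1)))
    (hgh : RightInvOn g (fun t : ℝ => -t / (1 + t ^ 2) ^ 2) (Ioc 0 (1 / 4))) :
    Tendsto g (𝓝[>] 0) atBot := by
  rw [tendsto_atBot]
  intro K
  set t₀ := min K (-1)
  have ht₀ : t₀ ∈ Iic (-1) := mem_Iic.2 (min_le_right _ _)
  have hpos : 0 < -t₀ / (1 + t₀ ^ 2) ^ 2 := div_pos (by linarith [mem_Iic.1 ht₀]) (by positivity)
  filter_upwards [Ioo_mem_nhdsGT (lt_min hpos (by norm_num : (0 : ℝ) < 1 / 4))] with s hs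
  have hs' : s ∈ Ioc 0 (1 / 4) := ⟨hs.1, (hs.2.trans_le (min_le_right _ _)).le⟩
  have hst₀ : g s ≤ t₀ := by
    rw [← strictMonoOn_neg_div_one_add_sq_sq.le_iff_le (hg hs') ht₀]
    exact (hgh hs').trans_le (hs.2.trans_le (min_le_left _ _)).le
  exact hst₀.trans (min_le_left _ _)

noncomputable def radialIntegral (u : ℝ → ℝ) (R a : ℝ) : ℝ := -∫ r in a..R, u (r / a)

section radialIntegral

variable {u : ℝ → ℝ} {R : ℝ}

theorem radialIntegral_eq_neg_mul_integral {a : ℝ} (ha : a ≠ 0) :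
    radialIntegral u R a = -(a * ∫ t in 1..R / a, u t) := by
  rw [radialIntegral, integral_comp_div u ha, div_self ha, smul_eq_mul]

variable (hu : AntitoneOn u (Ici 1))
include hu

theorem intervalIntegrable_comp_div {a c d : ℝ} (ha : 0 < a) (hc : a ≤ c) (hd : a ≤ d) :
    IntervalIntegrable (fun r => u (r / a)) volume c d := by
  refine AntitoneOn.intervalIntegrable fun x hx y hy hxy => hu ?_ ?_ ?_
  · exact (one_le_div ha).2 ((le_min hc hd).trans hx.1)
  · exact (one_le_div ha).2 ((le_min hc hd).trans hy.1)
  · exact div_le_div_of_nonneg_right hxy ha.le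

theorem continuousOn_radialIntegral : ContinuousOn (radialIntegral u R) (Ioc 0 R) := by
  have hR_div : ContinuousOn (fun a : ℝ => R / a) (Ioc 0 R) :=
    continuousOn_const.div continuousOn_id fun a ha => ha.1.ne'
  have hformula : ContinuousOn (fun a => -(a * ∫ t in 1..R / a, u t)) (Ioc 0 R) :=
    (continuousOn_id.mul (hu.continuousOn_primitive_Ici.comp hR_div
      fun a ha => (one_le_div ha.1).2 ha.2)).neg
  exact hformula.congr fun a ha => radialIntegral_eq_neg_mul_integral ha.1.ne'

theorem tendsto_radialIntegral_nhdsLT (hR : 0 < R) :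
    Tendsto (radialIntegral u R) (𝓝[<] R) (𝓝 0) := by
  have hzero : radialIntegral u R R = 0 := by simp [radialIntegral]
  rw [← hzero]
  exact ((continuousOn_radialIntegral hu) R ⟨hR, le_rfl⟩).mono_of_mem_nhdsWithin
    (mem_of_superset (Ioo_mem_nhdsLT hR) Ioo_subset_Ioc_self) |>.tendsto

variable (hu1 : ∀ t ∈ Ici (1 : ℝ), u t ≤ -1)
include hu1

theorem sub_le_radialIntegral_sub {a b : ℝ} (ha : 0 < a) (hab : a ≤ b) (hbR : b ≤ R) :
    b - a ≤ radialIntegral u R a - radialIntegral u R b := by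
  have hb := ha.trans_le hab
  have hsplit := integral_add_adjacent_intervals (intervalIntegrable_comp_div hu ha le_rfl hab)
    (intervalIntegrable_comp_div hu ha hab (hab.trans hbR))
  have hnear : ∫ r in a..b, u (r / a) ≤ ∫ _ in a..b, (-1 : ℝ) :=
    integral_mono_on hab (intervalIntegrable_comp_div hu ha le_rfl hab) intervalIntegrable_const
      fun r hr => hu1 _ ((one_le_div ha).2 hr.1)
  have hfar : ∫ r in b..R, u (r / a) ≤ ∫ r in b..R, u (r / b) :=
    integral_mono_on hbR (intervalIntegrable_comp_div hu ha hab (hab.trans hbR))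
      (intervalIntegrable_comp_div hu hb le_rfl hbR) fun r hr =>
        hu ((one_le_div hb).2 hr.1) ((one_le_div ha).2 (hab.trans hr.1))
          (div_le_div_of_nonneg_left (hb.le.trans hr.1) ha hab)
  rw [intervalIntegral.integral_const, smul_eq_mul] at hnear
  simp only [radialIntegral]
  linarith

theorem strictAntiOn_radialIntegral : StrictAntiOn (radialIntegral u R) (Ioc 0 R) :=
  fun a ha b hb hab => by linarith [sub_le_radialIntegral_sub hu hu1 ha.1 hab.le hb.2]

theorem half_mul_le_radialIntegral {a : ℝ} (ha : 0 < a) (haR : 2 * a ≤ R) :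
    R / 2 * -u (R / 2 / a) ≤ radialIntegral u R a := by
  have hsplit := integral_add_adjacent_intervals
    (intervalIntegrable_comp_div hu ha le_rfl (by linarith : a ≤ R / 2))
    (intervalIntegrable_comp_div hu ha (by linarith) (by linarith))
  have hnear : ∫ r in a..R / 2, u (r / a) ≤ ∫ _ in a..R / 2, (0 : ℝ) :=
    integral_mono_on (by linarith) (intervalIntegrable_comp_div hu ha le_rfl (by linarith))
      intervalIntegrable_const fun r hr => (hu1 _ ((one_le_div ha).2 hr.1)).trans (by norm_num)
  have hfar : ∫ r in R / 2..R, u (r / a) ≤ ∫ _ in R / 2..R, u (R / 2 / a) :=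
    integral_mono_on (by linarith) (intervalIntegrable_comp_div hu ha (by linarith) (by linarith))
      intervalIntegrable_const fun r hr =>
        hu ((one_le_div ha).2 (by linarith)) ((one_le_div ha).2 (by linarith [hr.1]))
          (div_le_div_of_nonneg_right hr.1 ha.le)
  rw [intervalIntegral.integral_zero] at hnear
  rw [intervalIntegral.integral_const, smul_eq_mul] at hfar
  simp only [radialIntegral]
  linarith

theorem tendsto_radialIntegral_nhdsGT_zero (hu_bot : Tendsto u atTop atBot) (hR : 0 < R) :
    Tendsto (radialIntegral u R) (𝓝[>] 0) atTop := by
  have hdiv : Tendsto (fun a : ℝ => R / 2 / a) (𝓝[>] 0) atTop := by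
    simpa only [div_eq_mul_inv] using tendsto_inv_nhdsGT_zero.const_mul_atTop (by positivity)
  have hlim : Tendsto (fun a => R / 2 * -u (R / 2 / a)) (𝓝[>] 0) atTop :=
    (tendsto_neg_atBot_atTop.comp (hu_bot.comp hdiv)).const_mul_atTop (by positivity)
  refine tendsto_atTop_mono' _ ?_ hlim
  filter_upwards [Ioo_mem_nhdsGT (by positivity : (0 : ℝ) < R / 2)] with a ha
  exact half_mul_le_radialIntegral hu hu1 ha.1 (by linarith [ha.2])

end radialIntegral

/-- Properties of φ(a) = −∫_a^R h⁻¹(a/(4r)) dr, where h(t) = −t/(1+t²)² on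
(−∞,−1]: φ is strictly decreasing on (0,R), tends to 0 as a → R⁻ and to +∞
as a → 0⁺, and there is a unique a_M ∈ (0,R) with φ(a_M) = M. -/
theorem phi_radial_properties (M R : ℝ) (hM : 0 < M) (hR : 0 < R)
    (h : ℝ → ℝ) (hdef : ∀ t, h t = -t / (1 + t^2)^2)
    (hinv : ℝ → ℝ)
    (hinvspec : ∀ s ∈ Set.Ioc (0:ℝ) (1/4),
      hinv s ∈ Set.Iic (-1 : ℝ) ∧ h (hinv s) = s)
    (φ : ℝ → ℝ) (hφ : ∀ a, φ a = -∫ r in a..R, hinv (a / (4 * r))) :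
    StrictAntiOn φ (Set.Ioo 0 R) ∧
      Filter.Tendsto φ (nhdsWithin R (Set.Iio R)) (nhds 0) ∧
      Filter.Tendsto φ (nhdsWithin 0 (Set.Ioi 0)) Filter.atTop ∧
      ∃! a : ℝ, a ∈ Set.Ioo 0 R ∧ φ a = M := by
  obtain rfl : h = fun t => -t / (1 + t ^ 2) ^ 2 := funext hdef
  have hmaps : MapsTo hinv (Ioc 0 (1 / 4)) (Iic (-1)) := fun s hs => (hinvspec s hs).1
  have hright : RightInvOn hinv (fun t : ℝ => -t / (1 + t ^ 2) ^ 2) (Ioc 0 (1 / 4)) :=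
    fun s hs => (hinvspec s hs).2
  have hquarter : MapsTo (fun t : ℝ => (4 * t)⁻¹) (Ici 1) (Ioc 0 (1 / 4)) := fun t ht => by
    have ht : (1 : ℝ) ≤ t := ht
    exact ⟨by positivity, by rw [inv_le_comm₀ (by positivity) (by norm_num)]; linarith⟩
  set u : ℝ → ℝ := fun t => hinv (4 * t)⁻¹
  have hu : AntitoneOn u (Ici 1) :=
    (strictMonoOn_neg_div_one_add_sq_sq.monotoneOn_of_rightInvOn hmaps hright).comp_AntitoneOn
      (fun x hx y _ hxy => inv_anti₀ (by linarith [mem_Ici.1 hx]) (by linarith)) hquarter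
  have hu1 : ∀ t ∈ Ici (1 : ℝ), u t ≤ -1 := fun t ht => hmaps (hquarter ht)
  have hu_bot : Tendsto u atTop atBot :=
    (tendsto_atBot_of_rightInvOn_neg_div_one_add_sq_sq hmaps hright).comp
      (tendsto_inv_atTop_nhdsGT_zero.comp (tendsto_id.const_mul_atTop four_pos))
  obtain rfl : φ = radialIntegral u R := funext fun a => by
    simp only [hφ, radialIntegral, u, mul_div_assoc', inv_div]
  have hanti : StrictAntiOn (radialIntegral u R) (Ioo 0 R) :=
    (strictAntiOn_radialIntegral hu hu1).mono Ioo_subset_Ioc_self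
  have hlimR := tendsto_radialIntegral_nhdsLT hu hR
  have hlim0 := tendsto_radialIntegral_nhdsGT_zero hu hu1 hu_bot hR
  exact ⟨hanti, hlimR, hlim0, hanti.existsUnique_eq_of_tendsto hR
    ((continuousOn_radialIntegral hu).mono Ioo_subset_Ioc_self) hlim0 hlimR hM⟩
end

section
/- Let Ω ⊂ ℝⁿ be a bounded open convex set, M > 0, q ≥ 0, and let C denote the set of functions u : Ω → [0,M] such that x ↦ u(x) − (q/2)|x|² is concave. Then any sequence (u_n) in C has a subsequence converging uniformly on compact subsets of Ω, with gradients converging almost everywhere, to some u ∈ C; in particular the Newton resistance D_Ω(u) = ∫_Ω dx/(1+|∇u(x)|²) attains its minimum on C. -/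
open MeasureTheory Filter Metric Set InnerProductSpace
open scoped Topology NNReal ENNReal RealInnerProductSpace

/-!
Write `u = g + (q/2)|x|²` with `g` concave. On a ball `B(x, r) ⊆ Ω` the function `g` is bounded
in terms of `M`, `q`, `|x|` and `r`, so the class is locally equi-Lipschitz and Arzelà–Ascoli
yields a subsequence converging uniformly on compact subsets of `Ω`; the bounds and concavity pass
to the limit. By Rademacher all these functions are differentiable almost everywhere, and at a
point `x` where they all are, q-concavity gives the upper quadratic support
`u(y) ≤ u(x) + ⟪∇u(x), y - x⟫ + (q/2)|y - x|²`. The gradients at `x` are bounded by the local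
Lipschitz constant, and each of their limit points is an upper quadratic support of the limit
function, hence equals its gradient. Dominated convergence then makes the resistance continuous
along such subsequences, and the direct method produces a minimizer.
-/

section ArzelaAscoli

variable {ι X α : Type*} [PseudoMetricSpace α]

theorem equicontinuousAt_of_lipschitzOnWith [PseudoMetricSpace X] {F : ι → X → α} {s : Set X}
    {x : X} {K : ℝ≥0} (hs : s ∈ 𝓝 x) (hF : ∀ i, LipschitzOnWith K (F i) s) :
    EquicontinuousAt F x := by
  refine Metric.equicontinuousAt_of_continuity_modulus (fun y => K * dist x y) ?_ _ ?_
  · exact (continuous_const.mul (continuous_const.dist continuous_id)).tendsto' x 0 (by simp)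
  · filter_upwards [hs] with y hy i
    exact (hF i).dist_le_mul x (mem_of_mem_nhds hs) y hy

variable [TopologicalSpace X]

theorem cauchySeq_of_equicontinuousAt_of_mem_closure {F : ℕ → X → α} {D : Set X} {x : X}
    (hF : EquicontinuousAt F x) (hx : x ∈ closure D) (hD : ∀ d ∈ D, CauchySeq fun k => F k d) :
    CauchySeq fun k => F k x := by
  refine Metric.cauchySeq_iff.2 fun ε hε => ?_
  obtain ⟨d, hdx, hd⟩ := ((Metric.equicontinuousAt_iff_right.1 hF (ε / 3) (by positivity))
    |>.and_frequently (mem_closure_iff_frequently.1 hx)).exists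
  obtain ⟨N, hN⟩ := Metric.cauchySeq_iff.1 (hD d hd) (ε / 3) (by positivity)
  refine ⟨N, fun m hm n hn => ?_⟩
  calc dist (F m x) (F n x)
      ≤ dist (F m x) (F m d) + dist (F m d) (F n d) + dist (F n d) (F n x) := dist_triangle4 ..
    _ < ε / 3 + ε / 3 + ε / 3 := by
        gcongr
        · exact hdx m
        · exact hN m hm n hn
        · rw [dist_comm]; exact hdx n
    _ = ε := by ring

/-- Arzelà–Ascoli: extract a subsequence converging on a countable dense subset of `U`;
equicontinuity spreads the convergence to `U` and makes it uniform on compact sets. -/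
theorem exists_subseq_tendstoUniformlyOn_isCompact [TopologicalSpace.PseudoMetrizableSpace X]
    {F : ℕ → X → α} {U : Set X} (hU : TopologicalSpace.IsSeparable U)
    (hF : ∀ x ∈ U, EquicontinuousAt F x) (hbdd : ∀ x ∈ U, ∃ Q, IsCompact Q ∧ ∀ k, F k x ∈ Q) :
    ∃ φ : ℕ → ℕ, StrictMono φ ∧ ∃ f : X → α,
      ∀ K ⊆ U, IsCompact K → TendstoUniformlyOn (fun k => F (φ k)) f atTop K := by
  obtain ⟨D, hDU, hDc, hUD⟩ := hU.exists_countable_dense_subset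
  choose! Q hQ hFQ using hbdd
  have : Countable D := hDc.to_subtype
  obtain ⟨l, -, φ, hφ, hlim⟩ := (isCompact_univ_pi fun d : D => hQ d (hDU d.2)).tendsto_subseq
    (x := fun k (d : D) => F k d) fun k => mem_univ_pi.2 fun d => hFQ d (hDU d.2) k
  have hcauchy : ∀ x ∈ U, CauchySeq fun k => F (φ k) x := fun x hx =>
    cauchySeq_of_equicontinuousAt_of_mem_closure ((hF x hx).comp φ) (hUD hx)
      fun d hd => ((tendsto_pi_nhds.1 hlim) ⟨d, hd⟩).cauchySeq
  have hconv : ∀ x, ∃ a, x ∈ U → Tendsto (fun k => F (φ k) x) atTop (𝓝 a) := by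
    intro x
    by_cases hx : x ∈ U
    · exact (cauchySeq_tendsto_of_isComplete (hQ x hx).isComplete (fun k => hFQ x hx (φ k))
        (hcauchy x hx)).imp fun _ h _ => h.2
    · exact ⟨F 0 x, fun h => absurd h hx⟩
  choose f hf using hconv
  refine ⟨φ, hφ, f, fun K hKU hK => ?_⟩
  have hpt : Tendsto ((⋃₀ {K}).domRestrict ∘ fun k => F (φ k)) atTop
      (𝓝 ((⋃₀ {K}).domRestrict f)) :=
    tendsto_pi_nhds.2 fun x => hf x (hKU (by simpa using x.2))
  have heq : ∀ K' ∈ ({K} : Set (Set X)), EquicontinuousOn (fun k => F (φ k)) K' := by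
    rintro K' hK' x hx
    exact ((hF x (hKU (mem_singleton_iff.1 hK' ▸ hx))).comp φ).equicontinuousWithinAt K'
  have := (EquicontinuousOn.tendsto_uniformOnFun_iff_pi' (by simpa using hK) heq atTop f).2 hpt
  exact UniformOnFun.tendsto_iff_tendstoUniformlyOn.1 this K rfl

end ArzelaAscoli

theorem LocallyLipschitzOn.ae_differentiableAt {E F : Type*} [NormedAddCommGroup E]
    [NormedSpace ℝ E] [FiniteDimensional ℝ E] [MeasurableSpace E] [BorelSpace E]
    [NormedAddCommGroup F] [NormedSpace ℝ F] [FiniteDimensional ℝ F]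
    {μ : Measure E} [μ.IsAddHaarMeasure] {s : Set E} {f : E → F} (hs : IsOpen s)
    (hf : LocallyLipschitzOn s f) : ∀ᵐ x ∂μ, x ∈ s → DifferentiableAt ℝ f x := by
  choose! K t ht hlip using fun x (hx : x ∈ s) => hf hx
  have hnhds : ∀ x ∈ s, t x ∈ 𝓝 x := fun x hx => by
    simpa [nhdsWithin_eq_nhds.2 (hs.mem_nhds hx)] using ht x hx
  obtain ⟨T, hTs, hTc, hsT⟩ := TopologicalSpace.countable_cover_nhdsWithin (s := s)
    (f := fun x => interior (t x)) fun x hx => mem_nhdsWithin_of_mem_nhds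
      (interior_mem_nhds.2 (hnhds x hx))
  have hae : ∀ᵐ y ∂μ, ∀ x ∈ T, y ∈ interior (t x) → DifferentiableAt ℝ f y := by
    refine (ae_ball_iff hTc).2 fun x hx => ?_
    filter_upwards [((hlip x (hTs hx)).mono interior_subset).ae_differentiableWithinAt_of_mem]
      with y hy hyt
    exact (hy hyt).differentiableAt (isOpen_interior.mem_nhds hyt)
  filter_upwards [hae] with y hy hys
  obtain ⟨x, hxT, hyx⟩ := mem_iUnion₂.1 (hsT hys)
  exact hy x hxT hyx

/-- The direct method of the calculus of variations, applied to a minimizing sequence. -/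
theorem exists_isMinOn_of_forall_exists_subseq {α : Type*} {S : Set α} {J : α → ℝ}
    (hne : S.Nonempty) (hbdd : BddBelow (J '' S))
    (hseq : ∀ u : ℕ → α, (∀ k, u k ∈ S) →
      ∃ φ : ℕ → ℕ, StrictMono φ ∧ ∃ v ∈ S, Tendsto (fun k => J (u (φ k))) atTop (𝓝 (J v))) :
    ∃ v ∈ S, IsMinOn J S v := by
  obtain ⟨m, -, hm, hmS⟩ := exists_seq_tendsto_sInf (hne.image J) hbdd
  choose u huS hu using hmS
  obtain ⟨φ, hφ, v, hvS, hv⟩ := hseq u huS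
  have hJv : J v = sInf (J '' S) :=
    tendsto_nhds_unique hv (by simpa only [Function.comp_def, hu] using hm.comp hφ.tendsto_atTop)
  exact ⟨v, hvS, isMinOn_iff.2 fun w hw => hJv ▸ csInf_le hbdd (mem_image_of_mem J hw)⟩

theorem concaveOn_of_tendsto {ι E : Type*} [AddCommGroup E] [Module ℝ E] {l : Filter ι} [l.NeBot]
    {F : ι → E → ℝ} {f : E → ℝ} {s : Set E} (hF : ∀ i, ConcaveOn ℝ s (F i))
    (hf : ∀ x ∈ s, Tendsto (fun i => F i x) l (𝓝 (f x))) : ConcaveOn ℝ s f := by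
  obtain ⟨i⟩ := Filter.NeBot.nonempty l
  refine ⟨(hF i).1, fun x hx y hy a b ha hb hab => ?_⟩
  exact le_of_tendsto_of_tendsto' (((hf x hx).const_smul a).add ((hf y hy).const_smul b))
    (hf _ ((hF i).1 hx hy ha hb hab)) fun j => (hF j).2 hx hy ha hb hab

section InnerProductSpace

variable {E : Type*} [NormedAddCommGroup E] [InnerProductSpace ℝ E]

variable [CompleteSpace E]

theorem ConcaveOn.le_add_inner_of_hasGradientAt {s : Set E} {f : E → ℝ} {x y p : E}
    (hf : ConcaveOn ℝ s f) (hx : x ∈ s) (hy : y ∈ s) (hp : HasGradientAt f p x) :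
    f y ≤ f x + ⟪p, y - x⟫ := by
  set ℓ : ℝ →ᵃ[ℝ] E := AffineMap.lineMap x y
  have hℓ : ConcaveOn ℝ (Icc 0 1) (f ∘ ℓ) :=
    (hf.comp_affineMap ℓ).subset (fun t ht => hf.1.lineMap_mem hx hy ht) (convex_Icc 0 1)
  have hderiv : HasDerivAt (f ∘ ℓ) ⟪p, y - x⟫ 0 := by
    have hp' : HasFDerivAt f (toDual ℝ E p) (ℓ 0) := by simpa [ℓ] using hp.hasFDerivAt
    simpa using hp'.comp_hasDerivAt (0 : ℝ) AffineMap.hasDerivAt_lineMap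
  have := hℓ.slope_le_of_hasDerivAt (left_mem_Icc.2 zero_le_one) (right_mem_Icc.2 zero_le_one)
    zero_lt_one hderiv
  simp only [slope, ℓ, Function.comp_apply, AffineMap.lineMap_apply_zero,
    AffineMap.lineMap_apply_one, sub_zero, inv_one, one_smul, vsub_eq_sub] at this
  linarith

theorem HasGradientAt.sub_mul_norm_sq {f : E → ℝ} {x p : E} (hf : HasGradientAt f p x) (c : ℝ) :
    HasGradientAt (fun y => f y - c * ‖y‖ ^ 2) (p - (2 * c) • x) x := by
  rw [hasGradientAt_iff_hasFDerivAt]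
  refine (hf.hasFDerivAt.sub ((hasStrictFDerivAt_norm_sq x).hasFDerivAt.const_mul c))
    |>.congr_fderiv ?_
  ext y
  simp only [sub_apply, toDual_apply_apply, smul_apply, coe_innerSL_apply, nsmul_eq_mul,
    Nat.cast_ofNat, smul_eq_mul, map_sub, map_smul, sub_right_inj]
  ring

/-- `y ↦ f y - ⟪p, y⟫ - c‖y - x‖²` has a local maximum at `x`, so its derivative
`⟪p' - p, ·⟫` vanishes there. -/
theorem HasGradientAt.eq_of_eventually_le_add_inner_add_sq {f : E → ℝ} {x p p' : E} {c : ℝ}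
    (hf : HasGradientAt f p' x) (h : ∀ᶠ y in 𝓝 x, f y ≤ f x + ⟪p, y - x⟫ + c * ‖y - x‖ ^ 2) :
    p' = p := by
  have hmax : IsLocalMax (fun y => f y - ⟪p, y⟫ - c * ‖y - x‖ ^ 2) x := by
    filter_upwards [h] with y hy
    simp only [sub_self, norm_zero, inner_sub_right] at hy ⊢
    linarith
  have hderiv := (hf.hasFDerivAt.sub (innerSL ℝ p).hasFDerivAt).sub
    (((hasFDerivAt_id x).sub_const x).norm_sq.const_mul c)
  have h0 := congr($(hmax.hasFDerivAt_eq_zero hderiv) (p' - p))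
  simp only [id_eq, sub_self, map_zero, ContinuousLinearMap.comp_id, smul_zero, sub_zero,
    _root_.sub_apply, toDual_apply_apply, innerSL_apply_apply, _root_.zero_apply] at h0
  rw [← sub_eq_zero, ← inner_self_eq_zero (𝕜 := ℝ), inner_sub_left]
  linarith

theorem norm_gradient_le_of_lipschitzOn {f : E → ℝ} {x : E} {s : Set E} {K : ℝ≥0}
    (hs : s ∈ 𝓝 x) (hf : LipschitzOnWith K f s) : ‖gradient f x‖ ≤ K := by
  rw [gradient, LinearIsometryEquiv.norm_map]
  exact norm_fderiv_le_of_lipschitzOn ℝ hs hf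

/-- Every subsequence of the bounded gradients has a convergent subsequence, whose limit is an
upper quadratic support of `f` at `x`, hence equals `∇f(x)`. -/
theorem tendsto_gradient_of_le_add_inner_add_sq [ProperSpace E] {F : ℕ → E → ℝ} {f : E → ℝ}
    {x : E} {s : Set E} {c B : ℝ} (hs : s ∈ 𝓝 x)
    (hlim : ∀ y ∈ s, Tendsto (fun k => F k y) atTop (𝓝 (f y)))
    (hf : DifferentiableAt ℝ f x)
    (hsupp : ∀ k, ∀ y ∈ s, F k y ≤ F k x + ⟪gradient (F k) x, y - x⟫ + c * ‖y - x‖ ^ 2)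
    (hbdd : ∀ k, ‖gradient (F k) x‖ ≤ B) :
    Tendsto (fun k => gradient (F k) x) atTop (𝓝 (gradient f x)) := by
  refine tendsto_of_subseq_tendsto fun ψ hψ => ?_
  obtain ⟨p, -, χ, hχ, hp⟩ := tendsto_subseq_of_bounded isBounded_closedBall
    fun k => mem_closedBall_zero_iff.2 (hbdd (ψ k))
  have hψχ : Tendsto (ψ ∘ χ) atTop atTop := hψ.comp hχ.tendsto_atTop
  refine ⟨χ, (hf.hasGradientAt.eq_of_eventually_le_add_inner_add_sq (c := c) ?_).symm ▸ hp⟩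
  filter_upwards [hs] with y hy
  exact le_of_tendsto_of_tendsto' ((hlim y hy).comp hψχ)
    ((((hlim x (mem_of_mem_nhds hs)).comp hψχ).add (hp.inner tendsto_const_nhds)).add_const _)
    fun k => hsupp _ y hy

theorem measurable_gradient [MeasurableSpace E] [BorelSpace E] (f : E → ℝ) :
    Measurable (gradient f) :=
  (toDual ℝ E).symm.continuous.measurable.comp (measurable_fderiv ℝ f)

end InnerProductSpace

section Resistance

variable {E : Type*} [NormedAddCommGroup E] [InnerProductSpace ℝ E] [CompleteSpace E]
  [MeasurableSpace E]

noncomputable def newtonResistance (μ : Measure E) (Ω : Set E) (u : E → ℝ) : ℝ :=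
  ∫ x in Ω, 1 / (1 + ‖gradient u x‖ ^ 2) ∂μ

theorem newtonResistance_nonneg (μ : Measure E) (Ω : Set E) (u : E → ℝ) :
    0 ≤ newtonResistance μ Ω u :=
  integral_nonneg fun _ => by positivity

theorem tendsto_newtonResistance [BorelSpace E] {μ : Measure E} {Ω : Set E}
    (hΩ : MeasurableSet Ω) (hμΩ : μ Ω ≠ ∞) {u : ℕ → E → ℝ} {v : E → ℝ}
    (h : ∀ᵐ x ∂μ, x ∈ Ω → Tendsto (fun k => gradient (u k) x) atTop (𝓝 (gradient v x))) :
    Tendsto (fun k => newtonResistance μ Ω (u k)) atTop (𝓝 (newtonResistance μ Ω v)) := by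
  have : IsFiniteMeasure (μ.restrict Ω) := isFiniteMeasure_restrict.2 hμΩ
  have hcont : Continuous fun y : E => 1 / (1 + ‖y‖ ^ 2) :=
    continuous_const.div (by fun_prop) fun y => by positivity
  refine tendsto_integral_of_dominated_convergence (fun _ => 1)
    (fun k => (hcont.measurable.comp (measurable_gradient (u k))).aestronglyMeasurable)
    (integrable_const 1) (fun k => ae_of_all _ fun x => ?_) ((ae_restrict_iff' hΩ).2 ?_)
  · rw [Real.norm_eq_abs, abs_of_nonneg (by positivity)]
    exact div_le_one_of_le₀ (le_add_of_nonneg_right (by positivity)) (by positivity)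
  · filter_upwards [h] with x hx hxΩ
    exact (hcont.tendsto _).comp (hx hxΩ)

end Resistance

section QConcave

variable {E : Type*} [NormedAddCommGroup E] [InnerProductSpace ℝ E]

def qConcaveClass (Ω : Set E) (M q : ℝ) : Set (E → ℝ) :=
  {u | (∀ x ∈ Ω, u x ∈ Icc 0 M) ∧ ConcaveOn ℝ Ω (fun x => u x - q / 2 * ‖x‖ ^ 2)}

namespace qConcaveClass

variable {Ω : Set E} {M q : ℝ}

theorem zero_mem (hΩ : Convex ℝ Ω) (hM : 0 ≤ M) (hq : 0 ≤ q) : 0 ∈ qConcaveClass Ω M q := by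
  refine ⟨fun x _ => ⟨le_rfl, hM⟩, ?_⟩
  have hsq : ConvexOn ℝ Ω fun x : E => ‖x‖ ^ 2 :=
    (convexOn_norm hΩ).pow (fun x _ => norm_nonneg x) 2
  exact ((hsq.smul (by positivity : 0 ≤ q / 2)).neg).congr fun x _ => by simp

theorem mem_of_tendsto {ι : Type*} {l : Filter ι} [l.NeBot] {u : ι → E → ℝ} {v : E → ℝ}
    (hu : ∀ i, u i ∈ qConcaveClass Ω M q)
    (hv : ∀ x ∈ Ω, Tendsto (fun i => u i x) l (𝓝 (v x))) : v ∈ qConcaveClass Ω M q :=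
  ⟨fun x hx => isClosed_Icc.mem_of_tendsto (hv x hx) (Eventually.of_forall fun i => (hu i).1 x hx),
    concaveOn_of_tendsto (fun i => (hu i).2) fun x hx => (hv x hx).sub_const _⟩

/-- On a ball `B(x, r) ⊆ Ω` the concave part `u - (q/2)|·|²` is bounded by
`M + (|q|/2)(|x| + r)²`, hence Lipschitz on `B(x, r/2)`. -/
theorem exists_lipschitzOnWith (hΩ : IsOpen Ω) {x : E} (hx : x ∈ Ω) :
    ∃ K : ℝ≥0, ∃ s ∈ 𝓝 x, ∀ u ∈ qConcaveClass Ω M q, LipschitzOnWith K u s := by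
  obtain ⟨r, hr, hball⟩ := Metric.isOpen_iff.1 hΩ x hx
  set B := M + |q| / 2 * (‖x‖ + r) ^ 2
  have hbound : ∀ u ∈ qConcaveClass Ω M q, ∀ z, dist z x < r → |u z - q / 2 * ‖z‖ ^ 2| ≤ B := by
    intro u hu z hz
    obtain ⟨h0, huM⟩ := hu.1 z (hball hz)
    have hz' : ‖z‖ ≤ ‖x‖ + r := by
      linarith [norm_le_norm_add_norm_sub' z x, dist_eq_norm z x]
    calc |u z - q / 2 * ‖z‖ ^ 2| ≤ |u z| + |q / 2 * ‖z‖ ^ 2| := abs_sub _ _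
      _ = u z + |q| / 2 * ‖z‖ ^ 2 := by
          rw [abs_of_nonneg h0, abs_mul, abs_div, abs_two, abs_pow, abs_norm]
      _ ≤ M + |q| / 2 * (‖x‖ + r) ^ 2 := by gcongr
  obtain ⟨Kh, t, ht, hh⟩ := (contDiff_const.mul (contDiff_norm_sq ℝ) :
    ContDiff ℝ 1 fun z : E => q / 2 * ‖z‖ ^ 2).locallyLipschitz x
  refine ⟨(2 * B / (r / 2)).toNNReal + Kh, ball x (r - r / 2) ∩ t,
    inter_mem (ball_mem_nhds x (by linarith)) ht, fun u hu => ?_⟩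
  have hg := ((hu.2.subset hball (convex_ball x r)).lipschitzOnWith_of_abs_le (half_pos hr)
    (hbound u hu)).mono (inter_subset_left (t := t))
  simpa only [sub_add_cancel] using hg.add (hh.mono inter_subset_right)

theorem ae_differentiableAt [FiniteDimensional ℝ E] [MeasurableSpace E] [BorelSpace E]
    {μ : Measure E} [μ.IsAddHaarMeasure] (hΩ : IsOpen Ω) {u : E → ℝ}
    (hu : u ∈ qConcaveClass Ω M q) : ∀ᵐ x ∂μ, x ∈ Ω → DifferentiableAt ℝ u x := by
  refine LocallyLipschitzOn.ae_differentiableAt hΩ fun x hx => ?_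
  obtain ⟨K, s, hs, hlip⟩ := exists_lipschitzOnWith (q := q) hΩ hx
  exact ⟨K, s, mem_nhdsWithin_of_mem_nhds hs, hlip u hu⟩

variable [CompleteSpace E]

theorem le_add_inner_add_sq {u : E → ℝ} (hu : u ∈ qConcaveClass Ω M q) {x y p : E} (hx : x ∈ Ω)
    (hy : y ∈ Ω) (hp : HasGradientAt u p x) : u y ≤ u x + ⟪p, y - x⟫ + q / 2 * ‖y - x‖ ^ 2 := by
  have := hu.2.le_add_inner_of_hasGradientAt hx hy (hp.sub_mul_norm_sq (q / 2))
  rw [norm_sub_sq_real]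
  simp only [inner_sub_left, inner_sub_right, real_inner_smul_left, real_inner_comm x y,
    real_inner_self_eq_norm_sq] at this ⊢
  linear_combination this

theorem exists_subseq_tendsto [FiniteDimensional ℝ E] [MeasurableSpace E] [BorelSpace E]
    {μ : Measure E} [μ.IsAddHaarMeasure] (hΩ : IsOpen Ω) (u : ℕ → E → ℝ)
    (hu : ∀ k, u k ∈ qConcaveClass Ω M q) :
    ∃ φ : ℕ → ℕ, StrictMono φ ∧ ∃ v ∈ qConcaveClass Ω M q,
      (∀ K ⊆ Ω, IsCompact K → TendstoUniformlyOn (fun k => u (φ k)) v atTop K) ∧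
      ∀ᵐ x ∂μ, x ∈ Ω → Tendsto (fun k => gradient (u (φ k)) x) atTop (𝓝 (gradient v x)) := by
  have hlip := fun x (hx : x ∈ Ω) => exists_lipschitzOnWith (M := M) (q := q) hΩ hx
  obtain ⟨φ, hφ, v, hunif⟩ := exists_subseq_tendstoUniformlyOn_isCompact (F := u)
    (.of_separableSpace Ω)
    (fun x hx => by
      obtain ⟨K, s, hs, h⟩ := hlip x hx
      exact equicontinuousAt_of_lipschitzOnWith hs fun k => h _ (hu k))
    fun x hx => ⟨Icc 0 M, isCompact_Icc, fun k => (hu k).1 x hx⟩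
  have hpt : ∀ x ∈ Ω, Tendsto (fun k => u (φ k) x) atTop (𝓝 (v x)) := fun x hx =>
    (hunif {x} (singleton_subset_iff.2 hx) isCompact_singleton).tendsto_at rfl
  have hv : v ∈ qConcaveClass Ω M q := mem_of_tendsto (fun k => hu (φ k)) hpt
  refine ⟨φ, hφ, v, hv, hunif, ?_⟩
  filter_upwards [ae_all_iff.2 fun k => ae_differentiableAt (μ := μ) hΩ (hu (φ k)),
    ae_differentiableAt hΩ hv] with x hdiff hdiffv hx
  obtain ⟨K, s, hs, hlips⟩ := hlip x hx
  exact tendsto_gradient_of_le_add_inner_add_sq (inter_mem hs (hΩ.mem_nhds hx))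
    (fun y hy => hpt y hy.2) (hdiffv hx)
    (fun k y hy => le_add_inner_add_sq (hu _) hx hy.2 (hdiff k hx).hasGradientAt)
    fun k => norm_gradient_le_of_lipschitzOn hs (hlips _ (hu _))

end qConcaveClass

end QConcave

/-- Compactness of the class of q-concave profiles with values in [0,M] on a
bounded open convex Ω ⊂ ℝⁿ (uniform convergence on compacts of a subsequence,
together with a.e. convergence of gradients, to a limit in the class), and
existence of a minimizer of the Newton resistance on this class. -/
theorem qconcave_compactness_and_existence (n : ℕ)
    (Ω : Set (EuclideanSpace ℝ (Fin n))) (hopen : IsOpen Ω)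
    (hbdd : Bornology.IsBounded Ω) (hconv : Convex ℝ Ω)
    (M q : ℝ) (hM : 0 < M) (hq : 0 ≤ q)
    (C : Set (EuclideanSpace ℝ (Fin n) → ℝ))
    (hC : C = {u | (∀ x ∈ Ω, u x ∈ Set.Icc 0 M) ∧
      ConcaveOn ℝ Ω (fun x => u x - q / 2 * ‖x‖^2)}) :
    (∀ u : ℕ → EuclideanSpace ℝ (Fin n) → ℝ, (∀ k, u k ∈ C) →
      ∃ φ : ℕ → ℕ, StrictMono φ ∧ ∃ v ∈ C,
        (∀ K : Set (EuclideanSpace ℝ (Fin n)), K ⊆ Ω → IsCompact K →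
          TendstoUniformlyOn (fun k => u (φ k)) v Filter.atTop K) ∧
        ∀ᵐ x ∂(volume : Measure (EuclideanSpace ℝ (Fin n))), x ∈ Ω →
          Filter.Tendsto (fun k => gradient (u (φ k)) x) Filter.atTop
            (nhds (gradient v x))) ∧
    ∃ v ∈ C, ∀ w ∈ C,
      (∫ x in Ω, 1 / (1 + ‖gradient v x‖^2)) ≤
        ∫ x in Ω, 1 / (1 + ‖gradient w x‖^2) := by
  subst hC
  have hcompact := fun u (hu : ∀ k, u k ∈ qConcaveClass Ω M q) =>
    qConcaveClass.exists_subseq_tendsto (μ := volume) hopen u hu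
  refine ⟨hcompact, ?_⟩
  obtain ⟨v, hv, hmin⟩ := exists_isMinOn_of_forall_exists_subseq (J := newtonResistance volume Ω)
    ⟨0, qConcaveClass.zero_mem hconv hM.le hq⟩
    ⟨0, forall_mem_image.2 fun w _ => newtonResistance_nonneg volume Ω w⟩
    fun u hu => by
      obtain ⟨φ, hφ, v, hv, -, hgrad⟩ := hcompact u hu
      exact ⟨φ, hφ, v, hv,
        tendsto_newtonResistance hopen.measurableSet hbdd.measure_lt_top.ne hgrad⟩
  exact ⟨v, hv, isMinOn_iff.1 hmin⟩
end
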